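/- arXiv:1304.7142 — 9 statements merged into one kernel-verified Lean document; each statement's English description precedes it below -/
import Mathlib

section
/- Let N, k ≥ 1 be integers, and let z : ℝ^N → ℝ be measurable with 1 ≤ z₋ ≤ z(x) ≤ z₊ < ∞ for a.e. x ∈ ℝ^N (with Lebesgue measure). Let (η_n) and η be measurable functions from ℝ^N to ℝ^k such that η_n(x) → η(x) for a.e. x ∈ ℝ^N and sup_n ∫_{ℝ^N} |η_n(x)|^{z(x)} dx < ∞. Then ∫_{ℝ^N} |η(x)|^{z(x)} dx < ∞ and ∫_{ℝ^N} ( |η_n(x)|^{z(x)} − |η_n(x) − η(x)|^{z(x)} − |η(x)|^{z(x)} ) dx → 0 as n → ∞. (Brezis–Lieb lemma, first version, for variable exponents.) -/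
/-!
Fatou's lemma makes `‖η‖ ^ z` integrable. Writing `f_n = ‖η_n‖ ^ z - ‖η_n - η‖ ^ z - ‖η‖ ^ z`,
the elementary inequality `|‖u‖ ^ p - ‖u - v‖ ^ p - ‖v‖ ^ p| ≤ δ ‖u - v‖ ^ p + C_δ ‖v‖ ^ p`,
uniform in `p ∈ [0, z₊]`, shows that the excess of `|f_n|` over `δ ‖η_n - η‖ ^ z` is dominated by
`C_δ ‖η‖ ^ z`, so its integral tends to `0` by dominated convergence, while
`δ ∫ ‖η_n - η‖ ^ z` is at most `δ` times a bound uniform in `n`. Hence `∫ |f_n| → 0`.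
-/

open MeasureTheory Filter Topology

section RpowInequalities

variable {a b p q κ : ℝ}

theorem Real.add_rpow_le_mul_rpow_add_mul_rpow (ha : 0 ≤ a) (hb : 0 ≤ b) (hκ : 0 < κ)
    (hp : 0 ≤ p) (hpq : p ≤ q) :
    (a + b) ^ p ≤ (1 + κ) ^ q * a ^ p + (1 + κ⁻¹) ^ q * b ^ p := by
  have hpow_le {c t : ℝ} (hc : 1 ≤ c) (ht : 0 ≤ t) : (c * t) ^ p ≤ c ^ q * t ^ p := by
    rw [Real.mul_rpow (by linarith) ht]
    gcongr
  have hκ₁ : 1 ≤ 1 + κ := by linarith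
  have hκ₂ : 1 ≤ 1 + κ⁻¹ := by linarith [inv_pos.2 hκ]
  rcases le_total b (κ * a) with hba | hab
  · calc (a + b) ^ p ≤ ((1 + κ) * a) ^ p := by gcongr; linarith
      _ ≤ (1 + κ) ^ q * a ^ p := hpow_le hκ₁ ha
      _ ≤ _ := le_add_of_nonneg_right (by positivity)
  · have hab' : a ≤ κ⁻¹ * b := by rw [inv_mul_eq_div, le_div_iff₀ hκ]; linarith
    calc (a + b) ^ p ≤ ((1 + κ⁻¹) * b) ^ p := by gcongr; linarith
      _ ≤ (1 + κ⁻¹) ^ q * b ^ p := hpow_le hκ₂ hb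
      _ ≤ _ := le_add_of_nonneg_left (by positivity)

theorem Real.abs_rpow_sub_rpow_le {x y : ℝ} (hx : 0 ≤ x) (hy : 0 ≤ y) (hb : 0 ≤ b)
    (hxy : |x - y| ≤ b) (hκ : 0 < κ) (hp : 0 ≤ p) (hpq : p ≤ q) :
    |x ^ p - y ^ p| ≤ ((1 + κ) ^ q - 1) * y ^ p + (1 + κ⁻¹) ^ q * b ^ p := by
  obtain ⟨hxy_le, hyx_le⟩ := abs_sub_le_iff.1 hxy
  have hcoef : 0 ≤ (1 + κ) ^ q - 1 :=
    sub_nonneg.2 (Real.one_le_rpow (by linarith) (hp.trans hpq))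
  have hC : 0 ≤ (1 + κ⁻¹) ^ q * b ^ p := by positivity
  rw [abs_le]
  constructor
  · rcases le_total y x with hyx | hxy
    · have hpow := Real.rpow_le_rpow hy hyx hp
      nlinarith [mul_nonneg hcoef (Real.rpow_nonneg hy p)]
    · have hsum := Real.add_rpow_le_mul_rpow_add_mul_rpow hx hb hκ hp hpq
      have hy_le := Real.rpow_le_rpow hy (show y ≤ x + b by linarith) hp
      have hpow := Real.rpow_le_rpow hx hxy hp
      nlinarith [mul_le_mul_of_nonneg_left hpow hcoef]
  · have hsum := Real.add_rpow_le_mul_rpow_add_mul_rpow hy hb hκ hp hpq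
    have hx_le := Real.rpow_le_rpow hx (show x ≤ y + b by linarith) hp
    linarith

theorem exists_one_add_rpow_le (q : ℝ) {δ : ℝ} (hδ : 0 < δ) :
    ∃ κ > 0, (1 + κ) ^ q ≤ 1 + δ := by
  have hcont : ContinuousAt (fun κ : ℝ => (1 + κ) ^ q) 0 :=
    (continuousAt_const.add continuousAt_id).rpow_const (by simp)
  have hnear : ∀ᶠ κ in 𝓝 0, (1 + κ) ^ q ≤ 1 + δ :=
    hcont.eventually (ge_mem_nhds (by simpa using hδ))
  exact ((hnear.filter_mono nhdsWithin_le_nhds).and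
    (self_mem_nhdsWithin (s := Set.Ioi 0))).exists.imp fun κ h => ⟨h.2, h.1⟩

end RpowInequalities

section NormRpow

variable {E : Type*} [SeminormedAddCommGroup E] {p q : ℝ}

theorem norm_sub_rpow_le (u v : E) (hp : 0 ≤ p) (hpq : p ≤ q) :
    ‖u - v‖ ^ p ≤ 2 ^ q * (‖u‖ ^ p + ‖v‖ ^ p) :=
  calc ‖u - v‖ ^ p ≤ (‖u‖ + ‖v‖) ^ p := by
        gcongr ?_ ^ _
        exact norm_sub_le u v
    _ ≤ (1 + 1) ^ q * ‖u‖ ^ p + (1 + 1⁻¹) ^ q * ‖v‖ ^ p :=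
        Real.add_rpow_le_mul_rpow_add_mul_rpow (norm_nonneg u) (norm_nonneg v) one_pos hp hpq
    _ = _ := by norm_num; ring

theorem exists_abs_norm_rpow_sub_sub_le (q : ℝ) {δ : ℝ} (hδ : 0 < δ) :
    ∃ C, ∀ p, 0 ≤ p → p ≤ q → ∀ u v : E,
      |‖u‖ ^ p - ‖u - v‖ ^ p - ‖v‖ ^ p| ≤ δ * ‖u - v‖ ^ p + C * ‖v‖ ^ p := by
  obtain ⟨κ, hκ, hκδ⟩ := exists_one_add_rpow_le q hδ
  refine ⟨(1 + κ⁻¹) ^ q + 1, fun p hp hpq u v => ?_⟩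
  have hdiff : |‖u‖ - ‖u - v‖| ≤ ‖v‖ := by simpa using abs_norm_sub_norm_le u (u - v)
  have key := Real.abs_rpow_sub_rpow_le (norm_nonneg u) (norm_nonneg (u - v)) (norm_nonneg v)
    hdiff hκ hp hpq
  have hcoef : ((1 + κ) ^ q - 1) * ‖u - v‖ ^ p ≤ δ * ‖u - v‖ ^ p := by gcongr; linarith
  calc |‖u‖ ^ p - ‖u - v‖ ^ p - ‖v‖ ^ p| ≤ |‖u‖ ^ p - ‖u - v‖ ^ p| + |‖v‖ ^ p| := abs_sub _ _
    _ ≤ _ := by rw [abs_of_nonneg (Real.rpow_nonneg (norm_nonneg v) p)]; linarith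

end NormRpow

section Integrals

variable {α E : Type*} [MeasurableSpace α] {μ : Measure α} [NormedAddCommGroup E]

theorem integrable_of_tendsto_ae_of_integral_norm_le {f : ℕ → α → E} {g : α → E} {C : ℝ}
    (hf : ∀ n, Integrable (f n) μ) (hC : ∀ n, ∫ x, ‖f n x‖ ∂μ ≤ C)
    (hlim : ∀ᵐ x ∂μ, Tendsto (fun n => f n x) atTop (𝓝 (g x))) : Integrable g μ := by
  have hfC (n : ℕ) : eLpNorm (f n) 1 μ ≤ ENNReal.ofReal C := by
    rw [eLpNorm_one_eq_lintegral_enorm, ← ofReal_integral_norm_eq_lintegral_enorm (hf n)]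
    exact ENNReal.ofReal_le_ofReal (hC n)
  have hgC := Lp.eLpNorm_le_of_ae_tendsto (Eventually.of_forall hfC) (fun n => (hf n).1) hlim
  exact memLp_one_iff_integrable.1
    ⟨aestronglyMeasurable_of_tendsto_ae atTop (fun n => (hf n).1) hlim,
      hgC.trans_lt ENNReal.ofReal_lt_top⟩

theorem tendsto_integral_norm_of_le_mul_add {f : ℕ → α → E} {h : ℕ → α → ℝ} {G : α → ℝ}
    {M : ℝ} (hf : ∀ n, AEStronglyMeasurable (f n) μ)
    (hlim : ∀ᵐ x ∂μ, Tendsto (fun n => f n x) atTop (𝓝 0))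
    (hh : ∀ n, Integrable (h n) μ) (hh0 : ∀ n, 0 ≤ᵐ[μ] h n) (hM : ∀ n, ∫ x, h n x ∂μ ≤ M)
    (hG : Integrable G μ)
    (hbound : ∀ δ > 0, ∃ C, ∀ n, ∀ᵐ x ∂μ, ‖f n x‖ ≤ δ * h n x + C * G x) :
    Tendsto (fun n => ∫ x, ‖f n x‖ ∂μ) atTop (𝓝 0) := by
  refine tendsto_order.2 ⟨fun b hb => Eventually.of_forall fun n =>
    hb.trans_le (integral_nonneg fun _ => norm_nonneg _), fun ε hε => ?_⟩
  obtain ⟨δ, hδ, hδM⟩ : ∃ δ > 0, δ * M < ε / 2 := by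
    refine ⟨ε / (2 * (|M| + 1)), by positivity, ?_⟩
    calc ε / (2 * (|M| + 1)) * M ≤ ε / (2 * (|M| + 1)) * |M| := by gcongr; exact le_abs_self M
      _ < ε / (2 * (|M| + 1)) * (|M| + 1) := by gcongr; linarith
      _ = ε / 2 := by field_simp
  obtain ⟨C, hC⟩ := hbound δ hδ
  -- The excess of `‖f n‖` over `δ * h n` is dominated by `C * G`.
  set W : ℕ → α → ℝ := fun n x => max (‖f n x‖ - δ * h n x) 0
  have hW_meas (n : ℕ) : AEStronglyMeasurable (W n) μ :=
    ((hf n).norm.sub ((hh n).1.const_mul δ)).sup aestronglyMeasurable_const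
  have hW_le (n : ℕ) : ∀ᵐ x ∂μ, ‖W n x‖ ≤ ‖C * G x‖ := by
    filter_upwards [hC n] with x hx
    rw [Real.norm_of_nonneg (le_max_right _ _)]
    exact max_le (by linarith [le_abs_self (C * G x), Real.norm_eq_abs (C * G x)]) (norm_nonneg _)
  have hW_lim : ∀ᵐ x ∂μ, Tendsto (fun n => W n x) atTop (𝓝 0) := by
    filter_upwards [hlim, ae_all_iff.2 hh0] with x hx hx0
    refine tendsto_of_tendsto_of_tendsto_of_le_of_le tendsto_const_nhds (by simpa using hx.norm)
      (fun n => le_max_right _ _) fun n => max_le ?_ (norm_nonneg _)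
    linarith [mul_nonneg hδ.le (hx0 n)]
  have hW_integral : Tendsto (fun n => ∫ x, W n x ∂μ) atTop (𝓝 0) := by
    simpa using tendsto_integral_of_dominated_convergence _ hW_meas (hG.const_mul C).norm hW_le
      hW_lim
  filter_upwards [hW_integral.eventually (gt_mem_nhds (half_pos hε))] with n hn
  have hW_int : Integrable (W n) μ := (hG.const_mul C).norm.mono' (hW_meas n) (hW_le n)
  calc ∫ x, ‖f n x‖ ∂μ ≤ ∫ x, (W n x + δ * h n x) ∂μ :=
        integral_mono_of_nonneg (Eventually.of_forall fun _ => norm_nonneg _)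
          (hW_int.add ((hh n).const_mul δ)) (Eventually.of_forall fun x => by
            linarith [le_max_left (‖f n x‖ - δ * h n x) 0])
    _ = ∫ x, W n x ∂μ + δ * ∫ x, h n x ∂μ := by
        rw [integral_add hW_int ((hh n).const_mul δ), integral_const_mul]
    _ < ε := by nlinarith [hM n]

variable {z : α → ℝ} {q : ℝ} {u v : α → E}

theorem integrable_norm_sub_rpow (hu : AEStronglyMeasurable u μ) (hv : AEStronglyMeasurable v μ)
    (hz : AEMeasurable z μ) (hzq : ∀ᵐ x ∂μ, 0 ≤ z x ∧ z x ≤ q)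
    (hu_int : Integrable (fun x => ‖u x‖ ^ z x) μ) (hv_int : Integrable (fun x => ‖v x‖ ^ z x) μ) :
    Integrable (fun x => ‖u x - v x‖ ^ z x) μ :=
  ((hu_int.add hv_int).const_mul (2 ^ q)).mono'
    ((hu.sub hv).norm.aemeasurable.pow hz).aestronglyMeasurable
    (hzq.mono fun x hx => by
      rw [Real.norm_of_nonneg (Real.rpow_nonneg (norm_nonneg _) _)]
      exact norm_sub_rpow_le (u x) (v x) hx.1 hx.2)

theorem integral_norm_sub_rpow_le (hzq : ∀ᵐ x ∂μ, 0 ≤ z x ∧ z x ≤ q)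
    (hu_int : Integrable (fun x => ‖u x‖ ^ z x) μ) (hv_int : Integrable (fun x => ‖v x‖ ^ z x) μ) :
    ∫ x, ‖u x - v x‖ ^ z x ∂μ ≤ 2 ^ q * (∫ x, ‖u x‖ ^ z x ∂μ + ∫ x, ‖v x‖ ^ z x ∂μ) := by
  rw [← integral_add hu_int hv_int, ← integral_const_mul]
  exact integral_mono_of_nonneg (Eventually.of_forall fun x => Real.rpow_nonneg (norm_nonneg _) _)
    ((hu_int.add hv_int).const_mul _)
    (hzq.mono fun x hx => norm_sub_rpow_le (u x) (v x) hx.1 hx.2)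

end Integrals

theorem brezis_lieb_first_version_general
    (N k : ℕ)
    (z : EuclideanSpace ℝ (Fin N) → ℝ) (hz : Measurable z)
    (zm zp : ℝ) (hzm : 1 ≤ zm)
    (hzbound : ∀ᵐ x : EuclideanSpace ℝ (Fin N), zm ≤ z x ∧ z x ≤ zp)
    (η : ℕ → EuclideanSpace ℝ (Fin N) → EuclideanSpace ℝ (Fin k))
    (ηlim : EuclideanSpace ℝ (Fin N) → EuclideanSpace ℝ (Fin k))
    (hηm : ∀ n, Measurable (η n)) (hηlimm : Measurable ηlim)
    (hconv : ∀ᵐ x : EuclideanSpace ℝ (Fin N),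
      Tendsto (fun n => η n x) atTop (𝓝 (ηlim x)))
    (hint : ∀ n, Integrable (fun x => ‖η n x‖ ^ z x))
    (hsup : ∃ C : ℝ, ∀ n, ∫ x, ‖η n x‖ ^ z x ≤ C) :
    Integrable (fun x => ‖ηlim x‖ ^ z x) ∧
      Tendsto
        (fun n => ∫ x, (‖η n x‖ ^ z x - ‖η n x - ηlim x‖ ^ z x - ‖ηlim x‖ ^ z x))
        atTop (𝓝 0) := by
  obtain ⟨C, hC⟩ := hsup
  have hz_pos : ∀ᵐ x, 0 < z x ∧ z x ≤ zp := hzbound.mono fun x hx => ⟨by linarith [hx.1], hx.2⟩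
  have hz_nonneg : ∀ᵐ x, 0 ≤ z x ∧ z x ≤ zp := hz_pos.mono fun x hx => ⟨hx.1.le, hx.2⟩
  -- `z > 0` is needed here: `0 ^ 0 = 1`.
  have hpow_lim : ∀ᵐ x, Tendsto (fun n => ‖η n x‖ ^ z x) atTop (𝓝 (‖ηlim x‖ ^ z x)) ∧
      Tendsto (fun n => ‖η n x - ηlim x‖ ^ z x) atTop (𝓝 0) := by
    filter_upwards [hconv, hz_pos] with x hx hzx
    refine ⟨hx.norm.rpow_const (Or.inr hzx.1.le), ?_⟩
    simpa [Real.zero_rpow hzx.1.ne'] using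
      (hx.sub_const (ηlim x)).norm.rpow_const (Or.inr hzx.1.le)
  have hlim_int : Integrable (fun x => ‖ηlim x‖ ^ z x) :=
    integrable_of_tendsto_ae_of_integral_norm_le hint (C := C) (fun n => by
      simpa only [Real.norm_eq_abs, Real.abs_rpow_of_nonneg (norm_nonneg _), abs_norm] using hC n)
      (hpow_lim.mono fun x hx => hx.1)
  have hdiff_int (n : ℕ) : Integrable (fun x => ‖η n x - ηlim x‖ ^ z x) :=
    integrable_norm_sub_rpow (hηm n).aestronglyMeasurable hηlimm.aestronglyMeasurable
      hz.aemeasurable hz_nonneg (hint n) hlim_int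
  have hdiff_bdd (n : ℕ) :
      ∫ x, ‖η n x - ηlim x‖ ^ z x ≤ 2 ^ zp * (C + ∫ x, ‖ηlim x‖ ^ z x) :=
    (integral_norm_sub_rpow_le hz_nonneg (hint n) hlim_int).trans (by gcongr; exact hC n)
  refine ⟨hlim_int, squeeze_zero_norm (fun n => norm_integral_le_integral_norm (fun x =>
      ‖η n x‖ ^ z x - ‖η n x - ηlim x‖ ^ z x - ‖ηlim x‖ ^ z x))
    (tendsto_integral_norm_of_le_mul_add
      (fun n => ((hint n).1.sub (hdiff_int n).1).sub hlim_int.1) ?_ hdiff_int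
      (fun n => Eventually.of_forall fun x => Real.rpow_nonneg (norm_nonneg _) _)
      hdiff_bdd hlim_int fun δ hδ => ?_)⟩
  · filter_upwards [hpow_lim] with x hx
    simpa using (hx.1.sub hx.2).sub_const (‖ηlim x‖ ^ z x)
  · obtain ⟨C', hC'⟩ := exists_abs_norm_rpow_sub_sub_le (E := EuclideanSpace ℝ (Fin k)) zp hδ
    exact ⟨C', fun n => hz_pos.mono fun x hx => hC' _ hx.1.le hx.2 _ _⟩

/-- Brezis–Lieb lemma, first version, for variable exponents. -/
theorem brezis_lieb_first_version
    (N k : ℕ) (hN : 1 ≤ N) (hk : 1 ≤ k)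
    (z : EuclideanSpace ℝ (Fin N) → ℝ) (hz : Measurable z)
    (zm zp : ℝ) (hzm : 1 ≤ zm)
    (hzbound : ∀ᵐ x : EuclideanSpace ℝ (Fin N), zm ≤ z x ∧ z x ≤ zp)
    (η : ℕ → EuclideanSpace ℝ (Fin N) → EuclideanSpace ℝ (Fin k))
    (ηlim : EuclideanSpace ℝ (Fin N) → EuclideanSpace ℝ (Fin k))
    (hηm : ∀ n, Measurable (η n)) (hηlimm : Measurable ηlim)
    (hconv : ∀ᵐ x : EuclideanSpace ℝ (Fin N),
      Tendsto (fun n => η n x) atTop (𝓝 (ηlim x)))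
    (hint : ∀ n, Integrable (fun x => ‖η n x‖ ^ z x))
    (hsup : ∃ C : ℝ, ∀ n, ∫ x, ‖η n x‖ ^ z x ≤ C) :
    Integrable (fun x => ‖ηlim x‖ ^ z x) ∧
      Tendsto
        (fun n => ∫ x, (‖η n x‖ ^ z x - ‖η n x - ηlim x‖ ^ z x - ‖ηlim x‖ ^ z x))
        atTop (𝓝 0) :=
  brezis_lieb_first_version_general N k z hz zm zp hzm hzbound η ηlim hηm hηlimm hconv hint hsup
end

section
/- Let N, k ≥ 1 be integers, and let z : ℝ^N → ℝ be measurable with 1 < z₋ ≤ z(x) ≤ z₊ < ∞ for a.e. x ∈ ℝ^N (with Lebesgue measure). Let (η_n) and η be measurable functions from ℝ^N to ℝ^k such that η_n(x) → η(x) for a.e. x ∈ ℝ^N and sup_n ∫_{ℝ^N} |η_n(x)|^{z(x)} dx < ∞. Then η_n converges weakly to η in L^{z(x)}(ℝ^N, ℝ^k); concretely, for every measurable v : ℝ^N → ℝ^k with ∫_{ℝ^N} |v(x)|^{z'(x)} dx < ∞, where z'(x) = z(x)/(z(x)−1), one has ∫_{ℝ^N} ⟨η_n(x), v(x)⟩ dx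 → ∫_{ℝ^N} ⟨η(x), v(x)⟩ dx as n → ∞. (Brezis–Lieb lemma, second version, for variable exponents.) -/
/-!
Fatou's lemma shows that the limit `η` has finite modular `∫ |η|^z`, so the modulars of the
differences `η_n - η` stay bounded by some `M`. Young's inequality with a parameter `ε ∈ (0, 1]`
gives `|η_n - η| |v| ≤ ε |η_n - η|^z + C_ε |v|^{z'}`; the positive part of
`|η_n - η| |v| - ε |η_n - η|^z` is thus dominated by `C_ε |v|^{z'}` and tends to `0` pointwise,
so `∫ |η_n - η| |v| ≤ o(1) + ε M`. Hence `∫ |η_n - η| |v| → 0`, which bounds the difference of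
the integrals of `⟨η_n, v⟩` and `⟨η, v⟩`.
-/

open MeasureTheory Filter Topology
open scoped InnerProductSpace

namespace Real

theorem mul_le_eps_mul_rpow_add_rpow_conjExponent {a b p p₀ ε : ℝ} (ha : 0 ≤ a) (hb : 0 ≤ b)
    (hp₀ : 1 < p₀) (hp₀p : p₀ ≤ p) (hε : 0 < ε) (hε1 : ε ≤ 1) :
    a * b ≤ ε * a ^ p + ε ^ (-(p₀ - 1)⁻¹) * b ^ (p / (p - 1)) := by
  have hp : 1 < p := hp₀.trans_le hp₀p
  set q := p / (p - 1)
  have hpq : p.HolderConjugate q := .conjExponent hp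
  have hεa : (ε ^ p⁻¹ * a) ^ p = ε * a ^ p := by
    rw [mul_rpow (by positivity) ha, ← rpow_mul hε.le, inv_mul_cancel₀ hpq.ne_zero, rpow_one]
  have hεb : (ε ^ (-p⁻¹) * b) ^ q = ε ^ (-(p - 1)⁻¹) * b ^ q := by
    rw [mul_rpow (by positivity) hb, ← rpow_mul hε.le]
    congr 2
    simp only [q]
    field_simp
  -- the constant has to be uniform in `p ≥ p₀`; this is where `ε ≤ 1` enters
  have hCε : ε ^ (-(p - 1)⁻¹) ≤ ε ^ (-(p₀ - 1)⁻¹) :=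
    rpow_le_rpow_of_exponent_ge hε hε1 <| neg_le_neg <|
      inv_anti₀ (sub_pos.2 hp₀) (by linarith)
  calc a * b = (ε ^ p⁻¹ * a) * (ε ^ (-p⁻¹) * b) := by
        rw [mul_mul_mul_comm, ← rpow_add hε, add_neg_cancel, rpow_zero, one_mul]
    _ ≤ (ε ^ p⁻¹ * a) ^ p / p + (ε ^ (-p⁻¹) * b) ^ q / q :=
        young_inequality_of_nonneg (by positivity) (by positivity) hpq
    _ ≤ (ε ^ p⁻¹ * a) ^ p + (ε ^ (-p⁻¹) * b) ^ q := by
        gcongr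
        · exact div_le_self (by positivity) hp.le
        · exact div_le_self (by positivity) hpq.symm.lt.le
    _ ≤ ε * a ^ p + ε ^ (-(p₀ - 1)⁻¹) * b ^ q := by
        rw [hεa, hεb]
        gcongr

theorem mul_le_rpow_add_rpow_conjExponent {a b p : ℝ} (ha : 0 ≤ a) (hb : 0 ≤ b) (hp : 1 < p) :
    a * b ≤ a ^ p + b ^ (p / (p - 1)) := by
  simpa using mul_le_eps_mul_rpow_add_rpow_conjExponent ha hb hp le_rfl one_pos le_rfl

theorem add_rpow_le_two_rpow_mul_add_rpow {a b p : ℝ} (ha : 0 ≤ a) (hb : 0 ≤ b) (hp : 0 ≤ p) :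
    (a + b) ^ p ≤ 2 ^ p * (a ^ p + b ^ p) := calc
  (a + b) ^ p ≤ (2 * max a b) ^ p := by
    rw [two_mul]; gcongr; exacts [le_max_left a b, le_max_right a b]
  _ = 2 ^ p * max a b ^ p := mul_rpow zero_le_two (le_max_of_le_left ha)
  _ = 2 ^ p * max (a ^ p) (b ^ p) := by rw [rpow_max ha hb hp]
  _ ≤ 2 ^ p * (a ^ p + b ^ p) := by
    gcongr; exact max_le_add_of_nonneg (by positivity) (by positivity)

end Real

namespace MeasureTheory

variable {α E F : Type*} [MeasurableSpace α] {μ : Measure α}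
  [NormedAddCommGroup E] [NormedAddCommGroup F] {z : α → ℝ}

theorem integrable_of_tendsto_of_integral_le {f : ℕ → α → ℝ} {g : α → ℝ} {C : ℝ}
    (hf : ∀ n, Integrable (f n) μ) (hf₀ : ∀ n, 0 ≤ᵐ[μ] f n)
    (hfg : ∀ᵐ x ∂μ, Tendsto (fun n => f n x) atTop (𝓝 (g x)))
    (hC : ∀ n, ∫ x, f n x ∂μ ≤ C) : Integrable g μ := by
  refine ⟨aestronglyMeasurable_of_tendsto_ae _ (fun n => (hf n).1) hfg, ?_⟩
  have hfC : ∀ n, ∫⁻ x, ‖f n x‖ₑ ∂μ ≤ ENNReal.ofReal C := fun n => by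
    rw [← ofReal_integral_norm_eq_lintegral_enorm (hf n)]
    refine ENNReal.ofReal_le_ofReal ((integral_congr_ae ?_).trans_le (hC n))
    filter_upwards [hf₀ n] with x hx using Real.norm_of_nonneg hx
  calc ∫⁻ x, ‖g x‖ₑ ∂μ = ∫⁻ x, liminf (fun n => ‖f n x‖ₑ) atTop ∂μ :=
        lintegral_congr_ae (by filter_upwards [hfg] with x hx using hx.enorm.liminf_eq.symm)
    _ ≤ liminf (fun n => ∫⁻ x, ‖f n x‖ₑ ∂μ) atTop :=
        lintegral_liminf_le' fun n => (hf n).1.enorm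
    _ ≤ ENNReal.ofReal C := (liminf_le_liminf (.of_forall hfC)).trans_eq (liminf_const _)
    _ < ⊤ := ENNReal.ofReal_lt_top

theorem integrable_norm_mul_norm_of_integrable_rpow {f : α → E} {g : α → F}
    (hf : AEStronglyMeasurable f μ) (hg : AEStronglyMeasurable g μ)
    (hz : ∀ᵐ x ∂μ, 1 < z x)
    (hfz : Integrable (fun x => ‖f x‖ ^ z x) μ)
    (hgz : Integrable (fun x => ‖g x‖ ^ (z x / (z x - 1))) μ) :
    Integrable (fun x => ‖f x‖ * ‖g x‖) μ := by
  refine (hfz.add hgz).mono' (hf.norm.mul hg.norm) ?_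
  filter_upwards [hz] with x hx
  rw [Real.norm_of_nonneg (by positivity)]
  exact Real.mul_le_rpow_add_rpow_conjExponent (norm_nonneg _) (norm_nonneg _) hx

theorem rpow_norm_sub_le {a b : E} {p p₁ : ℝ} (hp : 0 ≤ p) (hpp₁ : p ≤ p₁) :
    ‖a - b‖ ^ p ≤ 2 ^ p₁ * (‖a‖ ^ p + ‖b‖ ^ p) := calc
  ‖a - b‖ ^ p ≤ (‖a‖ + ‖b‖) ^ p := by gcongr; exact norm_sub_le a b
  _ ≤ 2 ^ p * (‖a‖ ^ p + ‖b‖ ^ p) :=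
    Real.add_rpow_le_two_rpow_mul_add_rpow (norm_nonneg _) (norm_nonneg _) hp
  _ ≤ 2 ^ p₁ * (‖a‖ ^ p + ‖b‖ ^ p) := by
    gcongr; exact one_le_two

section DifferenceBound

variable {f g : α → E} {z₁ : ℝ}

theorem integrable_rpow_norm_sub (hf : AEStronglyMeasurable f μ) (hg : AEStronglyMeasurable g μ)
    (hzm : AEMeasurable z μ) (hz : ∀ᵐ x ∂μ, 0 ≤ z x ∧ z x ≤ z₁)
    (hfz : Integrable (fun x => ‖f x‖ ^ z x) μ) (hgz : Integrable (fun x => ‖g x‖ ^ z x) μ) :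
    Integrable (fun x => ‖f x - g x‖ ^ z x) μ := by
  refine ((hfz.add hgz).const_mul (2 ^ z₁)).mono'
    ((hf.sub hg).norm.aemeasurable.pow hzm).aestronglyMeasurable ?_
  filter_upwards [hz] with x hx
  rw [Real.norm_of_nonneg (by positivity)]
  exact rpow_norm_sub_le hx.1 hx.2

theorem integral_rpow_norm_sub_le (hf : AEStronglyMeasurable f μ) (hg : AEStronglyMeasurable g μ)
    (hzm : AEMeasurable z μ) (hz : ∀ᵐ x ∂μ, 0 ≤ z x ∧ z x ≤ z₁)
    (hfz : Integrable (fun x => ‖f x‖ ^ z x) μ) (hgz : Integrable (fun x => ‖g x‖ ^ z x) μ) :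
    ∫ x, ‖f x - g x‖ ^ z x ∂μ ≤
      2 ^ z₁ * ((∫ x, ‖f x‖ ^ z x ∂μ) + ∫ x, ‖g x‖ ^ z x ∂μ) := by
  rw [← integral_add hfz hgz, ← integral_const_mul]
  refine integral_mono_ae (integrable_rpow_norm_sub hf hg hzm hz hfz hgz)
    ((hfz.add hgz).const_mul _) ?_
  filter_upwards [hz] with x hx
  exact rpow_norm_sub_le hx.1 hx.2

end DifferenceBound

section ModularlyBounded

variable {f : ℕ → α → E} {g : α → F} {z₀ M ε : ℝ}
  (hf : ∀ n, AEStronglyMeasurable (f n) μ) (hg : AEStronglyMeasurable g μ)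
  (hz₀ : 1 < z₀) (hz : ∀ᵐ x ∂μ, z₀ ≤ z x)
  (hfz : ∀ n, Integrable (fun x => ‖f n x‖ ^ z x) μ)
  (hgz : Integrable (fun x => ‖g x‖ ^ (z x / (z x - 1))) μ)
include hf hg hz₀ hz hfz hgz

theorem integrable_max_norm_mul_norm_sub_rpow (ε : ℝ) (n : ℕ) :
    Integrable (fun x => max (‖f n x‖ * ‖g x‖ - ε * ‖f n x‖ ^ z x) 0) μ :=
  ((integrable_norm_mul_norm_of_integrable_rpow (hf n) hg
    (hz.mono fun _ hx => hz₀.trans_le hx) (hfz n) hgz).sub ((hfz n).const_mul ε)).pos_part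

theorem tendsto_integral_max_norm_mul_norm_sub_rpow (hε : 0 < ε) (hε1 : ε ≤ 1)
    (hf₀ : ∀ᵐ x ∂μ, Tendsto (fun n => f n x) atTop (𝓝 0)) :
    Tendsto (fun n => ∫ x, max (‖f n x‖ * ‖g x‖ - ε * ‖f n x‖ ^ z x) 0 ∂μ) atTop (𝓝 0) := by
  have hbound : ∀ n, ∀ᵐ x ∂μ, ‖max (‖f n x‖ * ‖g x‖ - ε * ‖f n x‖ ^ z x) 0‖ ≤
      ε ^ (-(z₀ - 1)⁻¹) * ‖g x‖ ^ (z x / (z x - 1)) := fun n => by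
    filter_upwards [hz] with x hx
    rw [Real.norm_of_nonneg (le_max_right _ _), max_le_iff, sub_le_iff_le_add']
    exact ⟨Real.mul_le_eps_mul_rpow_add_rpow_conjExponent (norm_nonneg _) (norm_nonneg _)
      hz₀ hx hε hε1, by positivity⟩
  have hlim : ∀ᵐ x ∂μ,
      Tendsto (fun n => max (‖f n x‖ * ‖g x‖ - ε * ‖f n x‖ ^ z x) 0) atTop (𝓝 0) := by
    filter_upwards [hf₀] with x hx
    have hprod : Tendsto (fun n => ‖f n x‖ * ‖g x‖) atTop (𝓝 0) := by
      simpa using hx.norm.mul_const ‖g x‖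
    exact tendsto_of_tendsto_of_tendsto_of_le_of_le tendsto_const_nhds hprod
      (fun n => le_max_right _ _)
      (fun n => max_le (sub_le_self _ (by positivity)) (by positivity))
  simpa using tendsto_integral_of_dominated_convergence _
    (fun n => (integrable_max_norm_mul_norm_sub_rpow hf hg hz₀ hz hfz hgz ε n).1)
    (hgz.const_mul _) hbound hlim

theorem integral_norm_mul_norm_le_integral_max_add (hM : ∀ n, ∫ x, ‖f n x‖ ^ z x ∂μ ≤ M)
    (hε : 0 ≤ ε) (n : ℕ) :
    ∫ x, ‖f n x‖ * ‖g x‖ ∂μ ≤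
      (∫ x, max (‖f n x‖ * ‖g x‖ - ε * ‖f n x‖ ^ z x) 0 ∂μ) + ε * M := by
  have hexcess := integrable_max_norm_mul_norm_sub_rpow hf hg hz₀ hz hfz hgz ε n
  calc ∫ x, ‖f n x‖ * ‖g x‖ ∂μ
      ≤ ∫ x, (max (‖f n x‖ * ‖g x‖ - ε * ‖f n x‖ ^ z x) 0 + ε * ‖f n x‖ ^ z x) ∂μ :=
        integral_mono (integrable_norm_mul_norm_of_integrable_rpow (hf n) hg
          (hz.mono fun _ hx => hz₀.trans_le hx) (hfz n) hgz)
          (hexcess.add ((hfz n).const_mul ε)) fun x => sub_le_iff_le_add.1 (le_max_left _ _)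
    _ = (∫ x, max (‖f n x‖ * ‖g x‖ - ε * ‖f n x‖ ^ z x) 0 ∂μ) +
          ε * ∫ x, ‖f n x‖ ^ z x ∂μ := by
        rw [integral_add hexcess ((hfz n).const_mul ε), integral_const_mul]
    _ ≤ _ := by gcongr; exact hM n

theorem tendsto_integral_norm_mul_norm_of_integral_rpow_le
    (hf₀ : ∀ᵐ x ∂μ, Tendsto (fun n => f n x) atTop (𝓝 0))
    (hM : ∀ n, ∫ x, ‖f n x‖ ^ z x ∂μ ≤ M) :
    Tendsto (fun n => ∫ x, ‖f n x‖ * ‖g x‖ ∂μ) atTop (𝓝 0) := by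
  have hM₀ : 0 ≤ M := (integral_nonneg fun x => by positivity).trans (hM 0)
  refine tendsto_order.2 ⟨fun a ha => .of_forall fun n =>
    ha.trans_le (integral_nonneg fun x => by positivity), fun δ hδ => ?_⟩
  set ε := min (δ / (2 * (M + 1))) 1
  have hε : 0 < ε := lt_min (by positivity) one_pos
  have hεM : ε * M < δ / 2 := calc
    ε * M ≤ δ / (2 * (M + 1)) * M := by gcongr; exact min_le_left _ _
    _ < δ / 2 := by rw [div_mul_eq_mul_div, div_lt_div_iff₀ (by positivity) two_pos]; nlinarith
  filter_upwards [(tendsto_integral_max_norm_mul_norm_sub_rpow hf hg hz₀ hz hfz hgz hε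
    (min_le_right _ _) hf₀).eventually (gt_mem_nhds (half_pos hδ))] with n hn
  linarith [integral_norm_mul_norm_le_integral_max_add hf hg hz₀ hz hfz hgz hM hε.le n]

end ModularlyBounded

section InnerProduct

variable [InnerProductSpace ℝ E] {f g v : α → E}

theorem integrable_inner_of_integrable_rpow (hf : AEStronglyMeasurable f μ)
    (hv : AEStronglyMeasurable v μ) (hz : ∀ᵐ x ∂μ, 1 < z x)
    (hfz : Integrable (fun x => ‖f x‖ ^ z x) μ)
    (hvz : Integrable (fun x => ‖v x‖ ^ (z x / (z x - 1))) μ) :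
    Integrable (fun x => ⟪f x, v x⟫_ℝ) μ :=
  (integrable_norm_mul_norm_of_integrable_rpow hf hv hz hfz hvz).mono' (hf.inner hv)
    (.of_forall fun _ => norm_inner_le_norm _ _)

theorem abs_integral_inner_sub_integral_inner_le
    (hf : Integrable (fun x => ⟪f x, v x⟫_ℝ) μ) (hg : Integrable (fun x => ⟪g x, v x⟫_ℝ) μ)
    (hfg : Integrable (fun x => ‖f x - g x‖ * ‖v x‖) μ) :
    |∫ x, ⟪f x, v x⟫_ℝ ∂μ - ∫ x, ⟪g x, v x⟫_ℝ ∂μ| ≤ ∫ x, ‖f x - g x‖ * ‖v x‖ ∂μ := by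
  rw [← integral_sub hf hg, ← Real.norm_eq_abs]
  refine norm_integral_le_of_norm_le hfg (.of_forall fun x => ?_)
  rw [← inner_sub_left]
  exact norm_inner_le_norm _ _

theorem tendsto_integral_inner_of_tendsto_ae_of_integral_rpow_le {f : ℕ → α → E} {z₀ z₁ C : ℝ}
    (hf : ∀ n, AEStronglyMeasurable (f n) μ) (hv : AEStronglyMeasurable v μ)
    (hzm : AEMeasurable z μ) (hz₀ : 1 < z₀) (hz : ∀ᵐ x ∂μ, z₀ ≤ z x ∧ z x ≤ z₁)
    (hfg : ∀ᵐ x ∂μ, Tendsto (fun n => f n x) atTop (𝓝 (g x)))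
    (hfz : ∀ n, Integrable (fun x => ‖f n x‖ ^ z x) μ) (hC : ∀ n, ∫ x, ‖f n x‖ ^ z x ∂μ ≤ C)
    (hvz : Integrable (fun x => ‖v x‖ ^ (z x / (z x - 1))) μ) :
    Tendsto (fun n => ∫ x, ⟪f n x, v x⟫_ℝ ∂μ) atTop (𝓝 (∫ x, ⟪g x, v x⟫_ℝ ∂μ)) := by
  have hg : AEStronglyMeasurable g μ := aestronglyMeasurable_of_tendsto_ae _ hf hfg
  have hz₀' : ∀ᵐ x ∂μ, z₀ ≤ z x := hz.mono fun _ hx => hx.1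
  have hz₁ : ∀ᵐ x ∂μ, 1 < z x := hz₀'.mono fun _ hx => hz₀.trans_le hx
  have hz₂ : ∀ᵐ x ∂μ, 0 ≤ z x ∧ z x ≤ z₁ := hz.mono fun _ hx => ⟨by linarith [hx.1], hx.2⟩
  have hgz : Integrable (fun x => ‖g x‖ ^ z x) μ :=
    integrable_of_tendsto_of_integral_le hfz (fun n => .of_forall fun x => by positivity)
      (by filter_upwards [hfg, hz₂] with x hx hx₂ using hx.norm.rpow_const (.inr hx₂.1)) hC
  have hdiff n := integrable_rpow_norm_sub (hf n) hg hzm hz₂ (hfz n) hgz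
  have hprod := tendsto_integral_norm_mul_norm_of_integral_rpow_le
    (f := fun n x => f n x - g x) (fun n => (hf n).sub hg) hv hz₀ hz₀' hdiff hvz
    (by filter_upwards [hfg] with x hx using tendsto_sub_nhds_zero_iff.2 hx)
    (M := 2 ^ z₁ * (C + ∫ x, ‖g x‖ ^ z x ∂μ)) fun n =>
      (integral_rpow_norm_sub_le (hf n) hg hzm hz₂ (hfz n) hgz).trans (by gcongr; exact hC n)
  rw [tendsto_iff_norm_sub_tendsto_zero]
  refine squeeze_zero (fun n => norm_nonneg _) (fun n => ?_) hprod
  exact abs_integral_inner_sub_integral_inner_le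
    (integrable_inner_of_integrable_rpow (hf n) hv hz₁ (hfz n) hvz)
    (integrable_inner_of_integrable_rpow hg hv hz₁ hgz hvz)
    (integrable_norm_mul_norm_of_integrable_rpow ((hf n).sub hg) hv hz₁ (hdiff n) hvz)

end InnerProduct

end MeasureTheory

theorem brezis_lieb_second_version_general
    (N k : ℕ)
    (z : EuclideanSpace ℝ (Fin N) → ℝ) (hz : Measurable z)
    (zm zp : ℝ) (hzm : 1 < zm)
    (hzbound : ∀ᵐ x : EuclideanSpace ℝ (Fin N), zm ≤ z x ∧ z x ≤ zp)
    (η : ℕ → EuclideanSpace ℝ (Fin N) → EuclideanSpace ℝ (Fin k))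
    (ηlim : EuclideanSpace ℝ (Fin N) → EuclideanSpace ℝ (Fin k))
    (hηm : ∀ n, Measurable (η n))
    (hconv : ∀ᵐ x : EuclideanSpace ℝ (Fin N),
      Tendsto (fun n => η n x) atTop (𝓝 (ηlim x)))
    (hint : ∀ n, Integrable (fun x => ‖η n x‖ ^ z x))
    (hsup : ∃ C : ℝ, ∀ n, ∫ x, ‖η n x‖ ^ z x ≤ C) :
    ∀ v : EuclideanSpace ℝ (Fin N) → EuclideanSpace ℝ (Fin k),
      Measurable v →
      Integrable (fun x => ‖v x‖ ^ (z x / (z x - 1))) →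
      Tendsto (fun n => ∫ x, (inner ℝ (η n x) (v x) : ℝ)) atTop
        (𝓝 (∫ x, (inner ℝ (ηlim x) (v x) : ℝ))) := by
  intro v hv hvz
  obtain ⟨C, hC⟩ := hsup
  exact tendsto_integral_inner_of_tendsto_ae_of_integral_rpow_le
    (fun n => (hηm n).aestronglyMeasurable) hv.aestronglyMeasurable hz.aemeasurable hzm hzbound
    hconv hint hC hvz

/-- Brezis–Lieb lemma, second version, for variable exponents:
weak convergence in `L^{z(x)}`, tested against any `v ∈ L^{z'(x)}`. -/
theorem brezis_lieb_second_version
    (N k : ℕ) (hN : 1 ≤ N) (hk : 1 ≤ k)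
    (z : EuclideanSpace ℝ (Fin N) → ℝ) (hz : Measurable z)
    (zm zp : ℝ) (hzm : 1 < zm)
    (hzbound : ∀ᵐ x : EuclideanSpace ℝ (Fin N), zm ≤ z x ∧ z x ≤ zp)
    (η : ℕ → EuclideanSpace ℝ (Fin N) → EuclideanSpace ℝ (Fin k))
    (ηlim : EuclideanSpace ℝ (Fin N) → EuclideanSpace ℝ (Fin k))
    (hηm : ∀ n, Measurable (η n)) (hηlimm : Measurable ηlim)
    (hconv : ∀ᵐ x : EuclideanSpace ℝ (Fin N),
      Tendsto (fun n => η n x) atTop (𝓝 (ηlim x)))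
    (hint : ∀ n, Integrable (fun x => ‖η n x‖ ^ z x))
    (hsup : ∃ C : ℝ, ∀ n, ∫ x, ‖η n x‖ ^ z x ≤ C) :
    ∀ v : EuclideanSpace ℝ (Fin N) → EuclideanSpace ℝ (Fin k),
      Measurable v →
      Integrable (fun x => ‖v x‖ ^ (z x / (z x - 1))) →
      Tendsto (fun n => ∫ x, (inner ℝ (η n x) (v x) : ℝ)) atTop
        (𝓝 (∫ x, (inner ℝ (ηlim x) (v x) : ℝ))) :=
  brezis_lieb_second_version_general N k z hz zm zp hzm hzbound η ηlim hηm hconv hint hsup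
end

section
/- Let k ≥ 1 be an integer. There exists a constant C > 0 (depending only on k) such that for every real exponent z with 1 < z < 2 and all vectors y, h ∈ ℝ^k, one has | |y+h|^{z−2}(y+h) − |y|^{z−2} y | ≤ C |h|^{z−1}. Equivalently, the quantity α = sup over z ∈ (1,2), y ∈ ℝ^k, h ∈ ℝ^k \ {0} of | |y+h|^{z−2}(y+h) − |y|^{z−2} y | / |h|^{z−1} is finite. -/
/-!
Write `F x = ‖x‖ ^ q • x` with `q = z - 2 ∈ (-1, 0)`, so that `‖F x‖ = ‖x‖ ^ (q + 1)`.
If `‖y‖ ≤ 2 ‖h‖`, both `F (y + h)` and `F y` are then `O(‖h‖ ^ (q + 1))`. Otherwise the segment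
from `y` to `y + h` keeps distance `‖h‖` from the singularity at `0`; there
`‖DF x‖ ≤ (1 + |q|) ‖x‖ ^ q ≤ 2 ‖h‖ ^ q`, and the mean value theorem bounds the difference by
`2 ‖h‖ ^ q * ‖h‖ = 2 ‖h‖ ^ (q + 1)`.
-/

open Real

theorem rpow_le_mul_rpow_of_le_mul {a b c p : ℝ} (ha : 0 ≤ a) (hab : a ≤ c * b) (hc : 1 ≤ c)
    (hp₀ : 0 ≤ p) (hp₁ : p ≤ 1) : a ^ p ≤ c * b ^ p := by
  have hb : 0 ≤ b := nonneg_of_mul_nonneg_right (ha.trans hab) (by linarith)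
  calc a ^ p ≤ (c * b) ^ p := rpow_le_rpow ha hab hp₀
    _ = c ^ p * b ^ p := mul_rpow (by linarith) hb
    _ ≤ c * b ^ p := by
      gcongr
      calc c ^ p ≤ c ^ (1 : ℝ) := rpow_le_rpow_of_exponent_le hc hp₁
        _ = c := rpow_one c

section

variable {E : Type*} [NormedAddCommGroup E] [NormedSpace ℝ E]

theorem norm_rpow_norm_smul_self {q : ℝ} (hq : q ≠ -1) (x : E) :
    ‖‖x‖ ^ q • x‖ = ‖x‖ ^ (q + 1) := by
  rw [norm_smul, norm_of_nonneg (by positivity),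
    rpow_add_one' (norm_nonneg x) (by contrapose! hq; linarith)]

theorem norm_le_norm_of_mem_segment_add {x y h : E} (hy : 2 * ‖h‖ ≤ ‖y‖)
    (hx : x ∈ segment ℝ y (y + h)) : ‖h‖ ≤ ‖x‖ := by
  rw [segment_eq_image'] at hx
  obtain ⟨t, ⟨ht₀, ht₁⟩, rfl⟩ := hx
  have hth : ‖t • h‖ ≤ ‖h‖ := by
    rw [norm_smul, norm_of_nonneg ht₀]
    exact mul_le_of_le_one_left (norm_nonneg h) ht₁
  have hy' := norm_sub_le (y + t • h) (t • h)
  rw [add_sub_cancel_right] at hy'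
  rw [add_sub_cancel_left]
  linarith

theorem norm_rpow_norm_smul_sub_le_of_norm_le_two_mul {q : ℝ} (hq₀ : -1 < q)
    (hq₁ : q ≤ 0) {y h : E} (hy : ‖y‖ ≤ 2 * ‖h‖) :
    ‖‖y + h‖ ^ q • (y + h) - ‖y‖ ^ q • y‖ ≤ 5 * ‖h‖ ^ (q + 1) := by
  have hyh : ‖y + h‖ ≤ 3 * ‖h‖ := by linarith [norm_add_le y h]
  calc _ ≤ ‖‖y + h‖ ^ q • (y + h)‖ + ‖‖y‖ ^ q • y‖ := norm_sub_le _ _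
    _ = ‖y + h‖ ^ (q + 1) + ‖y‖ ^ (q + 1) := by
      rw [norm_rpow_norm_smul_self hq₀.ne', norm_rpow_norm_smul_self hq₀.ne']
    _ ≤ 3 * ‖h‖ ^ (q + 1) + 2 * ‖h‖ ^ (q + 1) := add_le_add
      (rpow_le_mul_rpow_of_le_mul (norm_nonneg _) hyh (by norm_num) (by linarith) (by linarith))
      (rpow_le_mul_rpow_of_le_mul (norm_nonneg _) hy (by norm_num) (by linarith) (by linarith))
    _ = 5 * ‖h‖ ^ (q + 1) := by ring

end

section

variable {E : Type*} [NormedAddCommGroup E] [InnerProductSpace ℝ E]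

theorem hasFDerivAt_rpow_norm_smul_self {x : E} (hx : x ≠ 0) (q : ℝ) :
    HasFDerivAt (fun y : E => ‖y‖ ^ q • y)
      (‖x‖ ^ q • ContinuousLinearMap.id ℝ E
        + ((q * ‖x‖ ^ (q - 1)) • fderiv ℝ (‖·‖) x).smulRight x) x :=
  (((contDiffAt_norm ℝ hx (n := 1)).differentiableAt one_ne_zero).hasFDerivAt.rpow_const
    (Or.inl (norm_ne_zero_iff.mpr hx))).smul (hasFDerivAt_id x)

theorem norm_fderiv_rpow_norm_smul_self_le {x : E} (hx : x ≠ 0) (q : ℝ) :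
    ‖fderiv ℝ (fun y : E => ‖y‖ ^ q • y) x‖ ≤ (1 + |q|) * ‖x‖ ^ q := by
  have hx₀ : 0 < ‖x‖ := norm_pos_iff.mpr hx
  have hnorm : ‖fderiv ℝ (‖·‖) x‖ ≤ 1 := by
    simpa using norm_fderiv_le_of_lipschitz ℝ (lipschitzWith_one_norm (E := E)) (x₀ := x)
  rw [(hasFDerivAt_rpow_norm_smul_self hx q).fderiv]
  calc _ ≤ ‖x‖ ^ q * 1 + |q| * ‖x‖ ^ (q - 1) * 1 * ‖x‖ := by
        refine (norm_add_le _ _).trans (add_le_add ?_ ?_)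
        · rw [norm_smul, norm_of_nonneg (by positivity)]
          gcongr
          exact ContinuousLinearMap.norm_id_le
        · rw [ContinuousLinearMap.norm_smulRight_apply, norm_smul, norm_mul,
            norm_of_nonneg (by positivity : 0 ≤ ‖x‖ ^ (q - 1)), Real.norm_eq_abs]
          gcongr
    _ = (1 + |q|) * ‖x‖ ^ q := by
      rw [mul_one, mul_one, mul_assoc, ← rpow_add_one hx₀.ne', sub_add_cancel]
      ring

theorem norm_rpow_norm_smul_sub_le_of_two_mul_norm_le {q : ℝ} (hq : q ≤ 0) {y h : E}
    (hy : 2 * ‖h‖ ≤ ‖y‖) :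
    ‖‖y + h‖ ^ q • (y + h) - ‖y‖ ^ q • y‖ ≤ (1 + |q|) * ‖h‖ ^ (q + 1) := by
  rcases eq_or_ne h 0 with rfl | hh
  · simp only [add_zero, sub_self, norm_zero]
    positivity
  have hh₀ : 0 < ‖h‖ := norm_pos_iff.mpr hh
  have hseg : ∀ x ∈ segment ℝ y (y + h), ‖h‖ ≤ ‖x‖ ∧ x ≠ 0 := fun x hx =>
    have hx' := norm_le_norm_of_mem_segment_add hy hx
    ⟨hx', norm_pos_iff.mp (hh₀.trans_le hx')⟩
  have hmvt := (convex_segment y (y + h)).norm_image_sub_le_of_norm_fderiv_le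
    (f := fun x : E => ‖x‖ ^ q • x) (C := (1 + |q|) * ‖h‖ ^ q)
    (fun x hx => (hasFDerivAt_rpow_norm_smul_self (hseg x hx).2 q).differentiableAt)
    (fun x hx => (norm_fderiv_rpow_norm_smul_self_le (hseg x hx).2 q).trans <|
      mul_le_mul_of_nonneg_left (rpow_le_rpow_of_nonpos hh₀ (hseg x hx).1 hq) (by positivity))
    (left_mem_segment ℝ y (y + h)) (right_mem_segment ℝ y (y + h))
  rwa [add_sub_cancel_left, mul_assoc, ← rpow_add_one hh₀.ne'] at hmvt

end

theorem sup_F_finite_general (k : ℕ) :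
    ∃ C : ℝ, 0 < C ∧ ∀ z : ℝ, 1 < z → z < 2 →
      ∀ y h : EuclideanSpace ℝ (Fin k),
        ‖(‖y + h‖ ^ (z - 2)) • (y + h) - (‖y‖ ^ (z - 2)) • y‖ ≤ C * ‖h‖ ^ (z - 1) := by
  refine ⟨5, by norm_num, fun z hz₁ hz₂ y h => ?_⟩
  rw [show z - 1 = z - 2 + 1 by ring]
  rcases le_or_gt ‖y‖ (2 * ‖h‖) with hy | hy
  · exact norm_rpow_norm_smul_sub_le_of_norm_le_two_mul (by linarith) (by linarith) hy
  · have hq : |z - 2| ≤ 4 := abs_le.mpr ⟨by linarith, by linarith⟩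
    calc _ ≤ (1 + |z - 2|) * ‖h‖ ^ (z - 2 + 1) :=
          norm_rpow_norm_smul_sub_le_of_two_mul_norm_le (by linarith) hy.le
      _ ≤ 5 * ‖h‖ ^ (z - 2 + 1) := by gcongr; linarith

/-- Uniform bound: for exponents `z ∈ (1,2)`, the map `y ↦ |y|^{z-2} y` is
`(z-1)`-Hölder with a constant depending only on `k`. -/
theorem sup_F_finite (k : ℕ) (hk : 1 ≤ k) :
    ∃ C : ℝ, 0 < C ∧ ∀ z : ℝ, 1 < z → z < 2 →
      ∀ y h : EuclideanSpace ℝ (Fin k),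
        ‖(‖y + h‖ ^ (z - 2)) • (y + h) - (‖y‖ ^ (z - 2)) • y‖ ≤ C * ‖h‖ ^ (z - 1) :=
  sup_F_finite_general k
end

section
/- Let k ≥ 1 be an integer and let z be a real exponent with 1 < z < 2. For all vectors y, h ∈ ℝ^k with |y| > 2 and |h| = 1, and for each coordinate index i ∈ {1, …, k}, one has | |y+h|^{z−2}(y_i + h_i) − |y|^{z−2} y_i | ≤ (3 − z) ∫_0^1 |y + t h|^{z−2} dt < 2. -/
/-!
Write `F x = ‖x‖ ^ p • x` with `p = z - 2`. Along the segment `t ↦ y + t • h` the derivative of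
`F` is `‖x‖ ^ p • h + p ‖x‖ ^ (p - 2) ⟪x, h⟫ • x`, whose norm is at most `(|p| + 1) ‖x‖ ^ p ‖h‖`
by Cauchy–Schwarz; integrating gives the bound for `F (y + h) - F y`, hence for each coordinate.
Since `‖y + t • h‖ > 1` and `p < 0`, the integrand is at most `1`, and `3 - z < 2`.
-/

open MeasureTheory Set
open scoped RealInnerProductSpace

section

variable {E : Type*} [NormedAddCommGroup E] [InnerProductSpace ℝ E]

theorem HasDerivAt.norm_rpow_smul {f : ℝ → E} {f' : E} {t : ℝ} (hf : HasDerivAt f f' t)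
    (h0 : f t ≠ 0) (p : ℝ) :
    HasDerivAt (fun s => ‖f s‖ ^ p • f s)
      (‖f t‖ ^ p • f' + (p * ‖f t‖ ^ (p - 2) * ⟪f t, f'⟫) • f t) t := by
  have hsq (x : E) : ‖x‖ ^ p = (‖x‖ ^ 2) ^ (p / 2) := by
    rw [← Real.rpow_natCast, ← Real.rpow_mul (norm_nonneg x)]
    ring_nf
  have hpow : HasDerivAt (fun s => ‖f s‖ ^ p) (p * ‖f t‖ ^ (p - 2) * ⟪f t, f'⟫) t := by
    have hpos : 0 < ‖f t‖ := norm_pos_iff.mpr h0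
    convert hf.norm_sq.rpow_const (p := p / 2) (Or.inl (by positivity)) using 1
    · exact funext fun s => hsq (f s)
    · rw [← Real.rpow_natCast, ← Real.rpow_mul hpos.le]
      push_cast
      ring_nf
  exact hpow.smul hf

theorem norm_rpow_smul_deriv_le (p : ℝ) {x : E} (hx : x ≠ 0) (v : E) :
    ‖‖x‖ ^ p • v + (p * ‖x‖ ^ (p - 2) * ⟪x, v⟫) • x‖ ≤ (|p| + 1) * ‖v‖ * ‖x‖ ^ p := by
  have hpos : 0 < ‖x‖ := norm_pos_iff.mpr hx
  have hsub : ‖x‖ ^ (p - 2) * ‖x‖ ^ 2 = ‖x‖ ^ p := by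
    rw [← Real.rpow_natCast, ← Real.rpow_add hpos]
    norm_num
  calc ‖‖x‖ ^ p • v + (p * ‖x‖ ^ (p - 2) * ⟪x, v⟫) • x‖
      ≤ ‖x‖ ^ p * ‖v‖ + |p| * ‖x‖ ^ (p - 2) * |⟪x, v⟫| * ‖x‖ := by
        refine (norm_add_le _ _).trans_eq ?_
        rw [norm_smul, norm_smul, Real.norm_eq_abs, Real.norm_eq_abs, abs_mul, abs_mul,
          abs_of_pos (Real.rpow_pos_of_pos hpos _), abs_of_pos (Real.rpow_pos_of_pos hpos _)]
    _ ≤ ‖x‖ ^ p * ‖v‖ + |p| * ‖x‖ ^ (p - 2) * (‖x‖ * ‖v‖) * ‖x‖ := by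
        gcongr
        exact abs_real_inner_le_norm x v
    _ = (|p| + 1) * ‖v‖ * ‖x‖ ^ p := by
        rw [← hsub]
        ring

theorem norm_rpow_smul_add_sub_le (p : ℝ) {y h : E}
    (hne : ∀ t ∈ Icc (0 : ℝ) 1, y + t • h ≠ 0) :
    ‖‖y + h‖ ^ p • (y + h) - ‖y‖ ^ p • y‖ ≤
      (|p| + 1) * ‖h‖ * ∫ t in (0 : ℝ)..1, ‖y + t • h‖ ^ p := by
  have hline (t : ℝ) : HasDerivAt (fun s : ℝ => y + s • h) h t := by
    simpa using ((hasDerivAt_id t).smul_const h).const_add y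
  have hderiv (t : ℝ) (ht : t ∈ Icc (0 : ℝ) 1) :=
    (hline t).norm_rpow_smul (hne t ht) p
  have hcont : ContinuousOn (fun t : ℝ => ‖y + t • h‖ ^ p) (Icc 0 1) :=
    ((continuous_const.add (continuous_id.smul continuous_const)).norm.continuousOn).rpow_const
      fun t ht => Or.inl (norm_ne_zero_iff.mpr (hne t ht))
  have key := norm_sub_le_integral_of_norm_deriv_le_of_le
    (f := fun t : ℝ => ‖y + t • h‖ ^ p • (y + t • h))
    (B := fun t => (|p| + 1) * ‖h‖ * ‖y + t • h‖ ^ p) zero_le_one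
    (fun t ht => (hderiv t ht).continuousAt.continuousWithinAt)
    (fun t ht => (hderiv t (Ioo_subset_Icc_self ht)).differentiableAt.differentiableWithinAt)
    (ae_of_all _ fun t ht => by
      rw [(hderiv t (Ioo_subset_Icc_self ht)).deriv]
      exact norm_rpow_smul_deriv_le p (hne t (Ioo_subset_Icc_self ht)) h)
    ((hcont.intervalIntegrable_of_Icc zero_le_one).const_mul _)
  simpa [intervalIntegral.integral_const_mul] using key

end

theorem bound_large_y_coord_general (k : ℕ) (z : ℝ) (hz1 : 1 < z) (hz2 : z < 2)
    (y h : EuclideanSpace ℝ (Fin k)) (hy : 2 < ‖y‖) (hh : ‖h‖ = 1) (i : Fin k) :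
    |‖y + h‖ ^ (z - 2) * (y i + h i) - ‖y‖ ^ (z - 2) * y i| ≤
        (3 - z) * ∫ t in (0:ℝ)..1, ‖y + t • h‖ ^ (z - 2) ∧
      (3 - z) * (∫ t in (0:ℝ)..1, ‖y + t • h‖ ^ (z - 2)) < 2 := by
  have hfar : ∀ t ∈ Icc (0 : ℝ) 1, 1 < ‖y + t • h‖ := by
    intro t ht
    have := norm_le_add_norm_add y (t • h)
    rw [norm_smul, hh, Real.norm_of_nonneg ht.1] at this
    linarith [ht.2]
  have hdiff := norm_rpow_smul_add_sub_le (z - 2) fun t ht =>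
    norm_pos_iff.mp (one_pos.trans (hfar t ht))
  have hconst : |z - 2| + 1 = 3 - z := by
    rw [abs_of_neg (by linarith)]
    ring
  rw [hconst, hh, mul_one] at hdiff
  have hint : ∫ t in (0:ℝ)..1, ‖y + t • h‖ ^ (z - 2) ≤ 1 := by
    have hle : ∀ t ∈ uIoc (0 : ℝ) 1, ‖‖y + t • h‖ ^ (z - 2)‖ ≤ 1 := fun t ht => by
      rw [uIoc_of_le zero_le_one] at ht
      rw [Real.norm_of_nonneg (by positivity)]
      exact Real.rpow_le_one_of_one_le_of_nonpos (hfar t (Ioc_subset_Icc_self ht)).le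
        (by linarith)
    simpa using (le_abs_self _).trans (intervalIntegral.norm_integral_le_of_norm_le_const hle)
  refine ⟨?_, ?_⟩
  · simpa [mul_add] using (PiLp.norm_apply_le _ i).trans hdiff
  · nlinarith

/-- For `1 < z < 2`, `|y| > 2`, `|h| = 1` and each coordinate `i`, one has
`| |y+h|^{z-2}(yᵢ+hᵢ) − |y|^{z-2} yᵢ | ≤ (3-z) ∫₀¹ |y+th|^{z-2} dt < 2`. -/
theorem bound_large_y_coord (k : ℕ) (hk : 1 ≤ k) (z : ℝ) (hz1 : 1 < z) (hz2 : z < 2)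
    (y h : EuclideanSpace ℝ (Fin k)) (hy : 2 < ‖y‖) (hh : ‖h‖ = 1) (i : Fin k) :
    |‖y + h‖ ^ (z - 2) * (y i + h i) - ‖y‖ ^ (z - 2) * y i| ≤
        (3 - z) * ∫ t in (0:ℝ)..1, ‖y + t • h‖ ^ (z - 2) ∧
      (3 - z) * (∫ t in (0:ℝ)..1, ‖y + t • h‖ ^ (z - 2)) < 2 :=
  bound_large_y_coord_general k z hz1 hz2 y h hy hh i
end

section
/- Let k ≥ 1 be an integer. There exists a constant C > 0 (depending only on k) such that for every real exponent z with 1 < z < 2 and all vectors a, b ∈ ℝ^k, one has | |a|^{z−2} a − |a−b|^{z−2}(a−b) − |b|^{z−2} b | ≤ C |b|^{z−1}. -/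
/-!
The map `x ↦ ‖x‖ ^ (p - 2) • x` is `(p - 1)`-Hölder with constant `4` on any real normed space
when `1 < p ≤ 2`, and its value at `b` has norm `‖b‖ ^ (p - 1)`; applying the Hölder bound to
`a` and `a - b` gives the estimate with `C = 5`.

For the Hölder bound, if both `‖x‖` and `‖y‖` are at most `2 ‖x - y‖` each term is already of size
`‖x - y‖ ^ (p - 1)`. Otherwise, say `‖y‖ > 2 ‖x - y‖`, both norms are at least `‖y‖ / 2`, and
writing the difference as `‖x‖ ^ (p - 2) • (x - y) + (‖x‖ ^ (p - 2) - ‖y‖ ^ (p - 2)) • y`, the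
mean value theorem for `t ↦ t ^ (p - 2)` on `[‖y‖ / 2, ∞)` controls the second term.
-/

open Real

noncomputable def normPowSMul {E : Type*} [NormedAddCommGroup E] [NormedSpace ℝ E]
    (p : ℝ) (x : E) : E :=
  ‖x‖ ^ (p - 2) • x

lemma abs_rpow_sub_rpow_le_of_le {m u v β : ℝ} (hm : 0 < m) (hu : m ≤ u) (hv : m ≤ v)
    (hβ1 : -1 ≤ β) (hβ0 : β ≤ 0) :
    |u ^ β - v ^ β| ≤ m ^ (β - 1) * |u - v| := by
  have hderiv : ∀ t ∈ Set.Ici m, HasDerivWithinAt (fun t : ℝ => t ^ β) (β * t ^ (β - 1))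
      (Set.Ici m) t := fun t ht =>
    (hasDerivAt_rpow_const (Or.inl (hm.trans_le ht).ne')).hasDerivWithinAt
  have hbound : ∀ t ∈ Set.Ici m, ‖β * t ^ (β - 1)‖ ≤ m ^ (β - 1) := fun t ht => by
    have ht' : 0 < t := hm.trans_le ht
    rw [norm_mul, norm_of_nonneg (rpow_nonneg ht'.le _)]
    calc ‖β‖ * t ^ (β - 1) ≤ 1 * m ^ (β - 1) :=
          mul_le_mul (abs_le.mpr ⟨hβ1, by linarith⟩)
            (rpow_le_rpow_of_nonpos hm ht (by linarith)) (rpow_nonneg ht'.le _) zero_le_one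
      _ = m ^ (β - 1) := one_mul _
  exact (convex_Ici m).norm_image_sub_le_of_norm_hasDerivWithin_le hderiv hbound hv hu

section

variable {E : Type*} [NormedAddCommGroup E] [NormedSpace ℝ E] {p : ℝ}

lemma norm_normPowSMul (hp : 1 < p) (x : E) : ‖normPowSMul p x‖ = ‖x‖ ^ (p - 1) := by
  rw [normPowSMul, norm_smul, norm_of_nonneg (by positivity),
    ← rpow_add_one' (norm_nonneg x) (by linarith)]
  ring_nf

lemma norm_normPowSMul_le_of_norm_le (hp1 : 1 < p) (hp2 : p ≤ 2) {x : E} {d : ℝ}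
    (hx : ‖x‖ ≤ 2 * d) : ‖normPowSMul p x‖ ≤ 2 * d ^ (p - 1) := by
  have hd : 0 ≤ d := by linarith [norm_nonneg x]
  rw [norm_normPowSMul hp1]
  calc ‖x‖ ^ (p - 1) ≤ (2 * d) ^ (p - 1) := rpow_le_rpow (norm_nonneg x) hx (by linarith)
    _ = 2 ^ (p - 1) * d ^ (p - 1) := mul_rpow zero_le_two hd
    _ ≤ 2 * d ^ (p - 1) := by
      gcongr
      exact rpow_le_self_of_one_le one_le_two (by linarith)

lemma norm_normPowSMul_sub_le_of_two_mul_lt (hp1 : 1 < p) (hp2 : p ≤ 2) {x y : E}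
    (hy : 2 * ‖x - y‖ < ‖y‖) :
    ‖normPowSMul p x - normPowSMul p y‖ ≤ 3 * ‖x - y‖ ^ (p - 1) := by
  obtain rfl | hne := eq_or_ne x y
  · simp only [sub_self, norm_zero]
    positivity
  set d := ‖x - y‖
  have hd : 0 < d := norm_pos_iff.mpr (sub_ne_zero.mpr hne)
  have hx : ‖y‖ - d ≤ ‖x‖ := by linarith [norm_sub_norm_le y x, norm_sub_rev y x]
  set m := ‖y‖ / 2 with hm_def
  have hdm : d < m := by linarith
  have hm : 0 < m := hd.trans hdm
  have hpow : d ^ (p - 2) * d = d ^ (p - 1) := by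
    rw [← rpow_add_one hd.ne']
    ring_nf
  have hsplit : normPowSMul p x - normPowSMul p y
      = ‖x‖ ^ (p - 2) • (x - y) + (‖x‖ ^ (p - 2) - ‖y‖ ^ (p - 2)) • y := by
    simp only [normPowSMul, smul_sub, sub_smul]
    abel
  have hfirst : ‖‖x‖ ^ (p - 2) • (x - y)‖ ≤ d ^ (p - 1) := by
    rw [norm_smul, norm_of_nonneg (by positivity), ← hpow]
    exact mul_le_mul_of_nonneg_right
      (rpow_le_rpow_of_nonpos hd (by linarith) (by linarith)) hd.le
  have hsecond : ‖(‖x‖ ^ (p - 2) - ‖y‖ ^ (p - 2)) • y‖ ≤ 2 * d ^ (p - 1) := by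
    have hmvt := abs_rpow_sub_rpow_le_of_le (u := ‖x‖) (v := ‖y‖) hm (by linarith) (by linarith)
      (by linarith : -1 ≤ p - 2) (by linarith : p - 2 ≤ 0)
    have hnorms : |‖x‖ - ‖y‖| ≤ d := abs_norm_sub_norm_le x y
    rw [norm_smul, Real.norm_eq_abs, ← hpow, ← mul_assoc]
    calc |‖x‖ ^ (p - 2) - ‖y‖ ^ (p - 2)| * ‖y‖
        ≤ m ^ (p - 2 - 1) * d * (2 * m) := by
          rw [hm_def, mul_div_cancel₀ _ two_ne_zero]
          gcongr
          exact hmvt.trans (mul_le_mul_of_nonneg_left hnorms (by positivity))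
      _ = 2 * m ^ (p - 2) * d := by
          rw [rpow_sub_one hm.ne']
          field_simp
      _ ≤ 2 * d ^ (p - 2) * d := by
          have := rpow_le_rpow_of_nonpos hd hdm.le (by linarith : p - 2 ≤ 0)
          gcongr
  calc ‖normPowSMul p x - normPowSMul p y‖
      ≤ ‖‖x‖ ^ (p - 2) • (x - y)‖ + ‖(‖x‖ ^ (p - 2) - ‖y‖ ^ (p - 2)) • y‖ := by
        rw [hsplit]
        exact norm_add_le _ _
    _ ≤ 3 * d ^ (p - 1) := by linarith

theorem norm_normPowSMul_sub_le (hp1 : 1 < p) (hp2 : p ≤ 2) (x y : E) :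
    ‖normPowSMul p x - normPowSMul p y‖ ≤ 4 * ‖x - y‖ ^ (p - 1) := by
  have hd : 0 ≤ ‖x - y‖ ^ (p - 1) := by positivity
  by_cases hy : 2 * ‖x - y‖ < ‖y‖
  · linarith [norm_normPowSMul_sub_le_of_two_mul_lt hp1 hp2 hy]
  by_cases hx : 2 * ‖y - x‖ < ‖x‖
  · have hfar := norm_normPowSMul_sub_le_of_two_mul_lt hp1 hp2 hx
    rw [norm_sub_rev, norm_sub_rev y] at hfar
    linarith
  rw [norm_sub_rev y] at hx
  calc ‖normPowSMul p x - normPowSMul p y‖ ≤ ‖normPowSMul p x‖ + ‖normPowSMul p y‖ :=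
        norm_sub_le _ _
    _ ≤ 2 * ‖x - y‖ ^ (p - 1) + 2 * ‖x - y‖ ^ (p - 1) :=
        add_le_add (norm_normPowSMul_le_of_norm_le hp1 hp2 (not_lt.mp hx))
          (norm_normPowSMul_le_of_norm_le hp1 hp2 (not_lt.mp hy))
    _ = 4 * ‖x - y‖ ^ (p - 1) := by ring

end

theorem pointwise_estimate_small_exponent_general (k : ℕ) :
    ∃ C : ℝ, 0 < C ∧ ∀ z : ℝ, 1 < z → z < 2 →
      ∀ a b : EuclideanSpace ℝ (Fin k),
        ‖(‖a‖ ^ (z - 2)) • a - (‖a - b‖ ^ (z - 2)) • (a - b) - (‖b‖ ^ (z - 2)) • b‖ ≤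
          C * ‖b‖ ^ (z - 1) := by
  refine ⟨5, by norm_num, fun z hz1 hz2 a b => ?_⟩
  have hholder := norm_normPowSMul_sub_le hz1 hz2.le a (a - b)
  rw [sub_sub_cancel] at hholder
  calc ‖normPowSMul z a - normPowSMul z (a - b) - normPowSMul z b‖
      ≤ ‖normPowSMul z a - normPowSMul z (a - b)‖ + ‖normPowSMul z b‖ := norm_sub_le _ _
    _ ≤ 4 * ‖b‖ ^ (z - 1) + ‖b‖ ^ (z - 1) := add_le_add hholder (norm_normPowSMul hz1 b).le
    _ = 5 * ‖b‖ ^ (z - 1) := by ring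

/-- For exponents `z ∈ (1,2)`, the Brezis–Lieb type pointwise estimate
`| |a|^{z-2} a − |a−b|^{z-2}(a−b) − |b|^{z-2} b | ≤ C |b|^{z-1}`
holds with a constant depending only on `k`. -/
theorem pointwise_estimate_small_exponent (k : ℕ) (hk : 1 ≤ k) :
    ∃ C : ℝ, 0 < C ∧ ∀ z : ℝ, 1 < z → z < 2 →
      ∀ a b : EuclideanSpace ℝ (Fin k),
        ‖(‖a‖ ^ (z - 2)) • a - (‖a - b‖ ^ (z - 2)) • (a - b) - (‖b‖ ^ (z - 2)) • b‖ ≤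
          C * ‖b‖ ^ (z - 1) :=
  pointwise_estimate_small_exponent_general k
end

section
/- Let k ≥ 1 be an integer and let z be a real exponent with z ≥ 2. For all vectors a, b ∈ ℝ^k and each coordinate index i ∈ {1, …, k}, one has | |a|^{z−2} a_i − |a−b|^{z−2}(a_i − b_i) | ≤ (z−1) |b| ( |a| + |b| )^{z−2}. Consequently, | |a|^{z−2} a − |a−b|^{z−2}(a−b) | ≤ C(k,z) ( |b|^{z−1} + |b| |a|^{z−2} ) for a constant C(k,z) depending only on k and z. -/
open Real

private lemma aux_scalar_pw {p s t : ℝ} (hp : 0 ≤ p) (hs : 0 ≤ s) (hst : s ≤ t) :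
    (t ^ p - s ^ p) * s ≤ p * t ^ p * (t - s) := by
  rcases eq_or_lt_of_le hst with rfl | hlt
  · simp
  rcases eq_or_lt_of_le hs with rfl | hspos
  · have h0 : (0:ℝ) ≤ t ^ p := Real.rpow_nonneg (le_of_lt hlt) p
    have : (0:ℝ) ≤ p * t ^ p * (t - 0) :=
      mul_nonneg (mul_nonneg hp h0) (by linarith)
    simpa using this
  · obtain ⟨ξ, hξ, hslope⟩ := exists_hasDerivAt_eq_slope (fun r => r ^ p)
      (fun r => p * r ^ (p - 1)) hlt
      (fun x _ => (Real.continuousAt_rpow_const x p (Or.inr hp)).continuousWithinAt)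
      (fun x hx => Real.hasDerivAt_rpow_const (Or.inl (ne_of_gt (hspos.trans hx.1))))
    have hξpos : 0 < ξ := hspos.trans hξ.1
    have hne : t - s ≠ 0 := sub_ne_zero.2 (ne_of_gt hlt)
    have ht : t ^ p - s ^ p = p * ξ ^ (p - 1) * (t - s) := by
      rw [hslope]
      exact (div_mul_cancel₀ _ hne).symm
    have h1 : ξ ^ (p - 1) * ξ = ξ ^ p := by
      rw [← Real.rpow_add_one hξpos.ne' (p - 1)]
      norm_num
    have h2 : ξ ^ p ≤ t ^ p := Real.rpow_le_rpow hξpos.le hξ.2.le hp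
    have e : 0 ≤ ξ ^ (p - 1) := Real.rpow_nonneg hξpos.le _
    calc (t ^ p - s ^ p) * s = p * (ξ ^ (p - 1) * s) * (t - s) := by rw [ht]; ring
      _ ≤ p * (ξ ^ (p - 1) * ξ) * (t - s) := by
          have h3 : ξ ^ (p - 1) * s ≤ ξ ^ (p - 1) * ξ :=
            mul_le_mul_of_nonneg_left hξ.1.le e
          have hts : 0 ≤ t - s := sub_nonneg.2 hst
          exact mul_le_mul_of_nonneg_right (mul_le_mul_of_nonneg_left h3 hp) hts
      _ = p * ξ ^ p * (t - s) := by rw [h1]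
      _ ≤ p * t ^ p * (t - s) := by
          have hts : 0 ≤ t - s := sub_nonneg.2 hst
          exact mul_le_mul_of_nonneg_right (mul_le_mul_of_nonneg_left h2 hp) hts

private lemma coord_abs_le_pw {k : ℕ} (x : EuclideanSpace ℝ (Fin k)) (i : Fin k) :
    |x i| ≤ ‖x‖ := by
  rw [EuclideanSpace.norm_eq]
  calc |x i| = Real.sqrt (‖x i‖ ^ 2) := by
        rw [Real.sqrt_sq (norm_nonneg _), Real.norm_eq_abs]
    _ ≤ Real.sqrt (∑ j, ‖x j‖ ^ 2) :=
        Real.sqrt_le_sqrt (Finset.single_le_sum (fun j _ => sq_nonneg ‖x j‖)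
          (Finset.mem_univ i))

private lemma coord_est_pw {k : ℕ} {p : ℝ} (hp : 0 ≤ p) (a c : EuclideanSpace ℝ (Fin k))
    (i : Fin k) (h : ‖c‖ ≤ ‖a‖) :
    |‖a‖ ^ p * a i - ‖c‖ ^ p * c i| ≤ (p + 1) * ‖a‖ ^ p * ‖a - c‖ := by
  have key : ‖a‖ ^ p * a i - ‖c‖ ^ p * c i
      = ‖a‖ ^ p * (a i - c i) + (‖a‖ ^ p - ‖c‖ ^ p) * c i := by ring
  have hsub : a i - c i = (a - c) i := rfl
  have h1 : |‖a‖ ^ p * (a i - c i)| ≤ ‖a‖ ^ p * ‖a - c‖ := by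
    rw [abs_mul, abs_of_nonneg (Real.rpow_nonneg (norm_nonneg a) p), hsub]
    exact mul_le_mul_of_nonneg_left (coord_abs_le_pw _ i)
      (Real.rpow_nonneg (norm_nonneg a) p)
  have hd : 0 ≤ ‖a‖ ^ p - ‖c‖ ^ p :=
    sub_nonneg.2 (Real.rpow_le_rpow (norm_nonneg c) h hp)
  have h2 : |(‖a‖ ^ p - ‖c‖ ^ p) * c i| ≤ p * ‖a‖ ^ p * ‖a - c‖ := by
    rw [abs_mul, abs_of_nonneg hd]
    calc (‖a‖ ^ p - ‖c‖ ^ p) * |c i| ≤ (‖a‖ ^ p - ‖c‖ ^ p) * ‖c‖ :=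
          mul_le_mul_of_nonneg_left (coord_abs_le_pw c i) hd
      _ ≤ p * ‖a‖ ^ p * (‖a‖ - ‖c‖) := aux_scalar_pw hp (norm_nonneg c) h
      _ ≤ p * ‖a‖ ^ p * ‖a - c‖ := by
          have := norm_sub_norm_le a c
          have hnn : 0 ≤ p * ‖a‖ ^ p :=
            mul_nonneg hp (Real.rpow_nonneg (norm_nonneg a) p)
          exact mul_le_mul_of_nonneg_left this hnn
  calc |‖a‖ ^ p * a i - ‖c‖ ^ p * c i|
      = |‖a‖ ^ p * (a i - c i) + (‖a‖ ^ p - ‖c‖ ^ p) * c i| := by rw [key]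
    _ ≤ |‖a‖ ^ p * (a i - c i)| + |(‖a‖ ^ p - ‖c‖ ^ p) * c i| := abs_add_le _ _
    _ ≤ ‖a‖ ^ p * ‖a - c‖ + p * ‖a‖ ^ p * ‖a - c‖ := add_le_add h1 h2
    _ = (p + 1) * ‖a‖ ^ p * ‖a - c‖ := by ring

private lemma coord_full_pw {k : ℕ} {p : ℝ} (hp : 0 ≤ p) (a c : EuclideanSpace ℝ (Fin k))
    (i : Fin k) :
    |‖a‖ ^ p * a i - ‖c‖ ^ p * c i| ≤ (p + 1) * (‖a‖ + ‖a - c‖) ^ p * ‖a - c‖ := by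
  have hc : ‖c‖ ≤ ‖a‖ + ‖a - c‖ := by
    have h := norm_sub_le a (a - c)
    rwa [sub_sub_cancel] at h
  have ha : ‖a‖ ≤ ‖a‖ + ‖a - c‖ := le_add_of_nonneg_right (norm_nonneg _)
  have hnn : (0:ℝ) ≤ ‖a - c‖ := norm_nonneg _
  have hp1 : (0:ℝ) ≤ p + 1 := by linarith
  rcases le_total ‖c‖ ‖a‖ with h | h
  · refine (coord_est_pw hp a c i h).trans ?_
    have h4 : ‖a‖ ^ p ≤ (‖a‖ + ‖a - c‖) ^ p :=
      Real.rpow_le_rpow (norm_nonneg a) ha hp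
    exact mul_le_mul_of_nonneg_right (mul_le_mul_of_nonneg_left h4 hp1) hnn
  · rw [abs_sub_comm]
    have hce := coord_est_pw hp c a i h
    rw [norm_sub_rev] at hce
    refine hce.trans ?_
    have h4 : ‖c‖ ^ p ≤ (‖a‖ + ‖a - c‖) ^ p :=
      Real.rpow_le_rpow (norm_nonneg c) hc hp
    exact mul_le_mul_of_nonneg_right (mul_le_mul_of_nonneg_left h4 hp1) hnn

/-- For exponents `z ≥ 2`: coordinatewise estimate
`| |a|^{z-2} aᵢ − |a−b|^{z-2}(aᵢ−bᵢ) | ≤ (z−1)|b|(|a|+|b|)^{z−2}`, and consequently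
`| |a|^{z-2} a − |a−b|^{z-2}(a−b) | ≤ C(k,z)(|b|^{z−1} + |b||a|^{z−2})`. -/
theorem pointwise_estimate_large_exponent (k : ℕ) (hk : 1 ≤ k) (z : ℝ) (hz : 2 ≤ z) :
    (∀ a b : EuclideanSpace ℝ (Fin k), ∀ i : Fin k,
        |‖a‖ ^ (z - 2) * a i - ‖a - b‖ ^ (z - 2) * (a i - b i)| ≤
          (z - 1) * ‖b‖ * (‖a‖ + ‖b‖) ^ (z - 2)) ∧
      ∃ C : ℝ, 0 < C ∧ ∀ a b : EuclideanSpace ℝ (Fin k),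
        ‖(‖a‖ ^ (z - 2)) • a - (‖a - b‖ ^ (z - 2)) • (a - b)‖ ≤
          C * (‖b‖ ^ (z - 1) + ‖b‖ * ‖a‖ ^ (z - 2)) := by
  have hp : (0:ℝ) ≤ z - 2 := by linarith
  have part1 : ∀ a b : EuclideanSpace ℝ (Fin k), ∀ i : Fin k,
      |‖a‖ ^ (z - 2) * a i - ‖a - b‖ ^ (z - 2) * (a i - b i)| ≤
        (z - 1) * ‖b‖ * (‖a‖ + ‖b‖) ^ (z - 2) := by
    intro a b i
    have h := coord_full_pw hp a (a - b) i
    rw [sub_sub_cancel] at h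
    have hsub : (a - b) i = a i - b i := rfl
    rw [hsub] at h
    have : (z - 2 + 1) * (‖a‖ + ‖b‖) ^ (z - 2) * ‖b‖
        = (z - 1) * ‖b‖ * (‖a‖ + ‖b‖) ^ (z - 2) := by ring
    linarith [h, this.symm ▸ h]
  refine ⟨part1, (k : ℝ) * (z - 1) * 2 ^ (z - 2), ?_, ?_⟩
  · have hk' : (1:ℝ) ≤ (k:ℝ) := by exact_mod_cast hk
    have h2 : (0:ℝ) < 2 ^ (z - 2) := Real.rpow_pos_of_pos (by norm_num) _
    exact mul_pos (mul_pos (by linarith) (by linarith)) h2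
  · intro a b
    set w : EuclideanSpace ℝ (Fin k) :=
      (‖a‖ ^ (z - 2)) • a - (‖a - b‖ ^ (z - 2)) • (a - b) with hw
    have hB : (0:ℝ) ≤ (z - 1) * ‖b‖ * (‖a‖ + ‖b‖) ^ (z - 2) := by
      have h0 := Real.rpow_nonneg (by positivity : (0:ℝ) ≤ ‖a‖ + ‖b‖) (z - 2)
      have hb := norm_nonneg b
      exact mul_nonneg (mul_nonneg (by linarith) hb) h0
    have hwi : ∀ i : Fin k, |w i| ≤ (z - 1) * ‖b‖ * (‖a‖ + ‖b‖) ^ (z - 2) := by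
      intro i
      have : w i = ‖a‖ ^ (z - 2) * a i - ‖a - b‖ ^ (z - 2) * (a i - b i) := rfl
      rw [this]
      exact part1 a b i
    have hnorm : ‖w‖ ≤ (k:ℝ) * ((z - 1) * ‖b‖ * (‖a‖ + ‖b‖) ^ (z - 2)) := by
      set B := (z - 1) * ‖b‖ * (‖a‖ + ‖b‖) ^ (z - 2)
      rw [EuclideanSpace.norm_eq]
      have hsum : ∑ i, ‖w i‖ ^ 2 ≤ (k:ℝ) * B ^ 2 := by
        calc ∑ i, ‖w i‖ ^ 2 ≤ ∑ _i : Fin k, B ^ 2 := by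
              refine Finset.sum_le_sum fun i _ => ?_
              rw [Real.norm_eq_abs]
              exact pow_le_pow_left₀ (abs_nonneg _) (hwi i) 2
          _ = (k:ℝ) * B ^ 2 := by simp [mul_comm]
      have hk' : (1:ℝ) ≤ (k:ℝ) := by exact_mod_cast hk
      calc Real.sqrt (∑ i, ‖w i‖ ^ 2) ≤ Real.sqrt ((k:ℝ) ^ 2 * B ^ 2) := by
            apply Real.sqrt_le_sqrt
            nlinarith [hsum, mul_nonneg (mul_nonneg (by linarith : (0:ℝ) ≤ (k:ℝ))
              (sub_nonneg.2 hk')) (sq_nonneg B)]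
        _ = (k:ℝ) * B := by
            rw [← mul_pow, Real.sqrt_sq (by positivity)]
    refine hnorm.trans ?_
    have hbb : ‖b‖ * ‖b‖ ^ (z - 2) = ‖b‖ ^ (z - 1) := by
      rcases eq_or_ne ‖b‖ 0 with h0 | h0
      · rw [h0, zero_mul, Real.zero_rpow (by linarith : z - 1 ≠ 0)]
      · have hz1 : z - 1 = (z - 2) + 1 := by ring
        rw [hz1, Real.rpow_add_one h0]
        ring
    have hM : (‖a‖ + ‖b‖) ^ (z - 2) ≤ 2 ^ (z - 2) * (‖a‖ ^ (z - 2) + ‖b‖ ^ (z - 2)) := by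
      have h1 : ‖a‖ + ‖b‖ ≤ 2 * max ‖a‖ ‖b‖ := by
        have := le_max_left ‖a‖ ‖b‖
        have := le_max_right ‖a‖ ‖b‖
        linarith
      have hmax : (0:ℝ) ≤ max ‖a‖ ‖b‖ := le_trans (norm_nonneg a) (le_max_left _ _)
      calc (‖a‖ + ‖b‖) ^ (z - 2) ≤ (2 * max ‖a‖ ‖b‖) ^ (z - 2) :=
            Real.rpow_le_rpow (by positivity) h1 hp
        _ = 2 ^ (z - 2) * (max ‖a‖ ‖b‖) ^ (z - 2) :=
            Real.mul_rpow (by norm_num) hmax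
        _ ≤ 2 ^ (z - 2) * (‖a‖ ^ (z - 2) + ‖b‖ ^ (z - 2)) := by
            have h2 : (0:ℝ) < 2 ^ (z - 2) := Real.rpow_pos_of_pos (by norm_num) _
            have : (max ‖a‖ ‖b‖) ^ (z - 2) ≤ ‖a‖ ^ (z - 2) + ‖b‖ ^ (z - 2) := by
              rcases le_total ‖a‖ ‖b‖ with h | h
              · rw [max_eq_right h]
                exact le_add_of_nonneg_left (Real.rpow_nonneg (norm_nonneg a) _)
              · rw [max_eq_left h]
                exact le_add_of_nonneg_right (Real.rpow_nonneg (norm_nonneg b) _)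
            nlinarith
    have hk' : (0:ℝ) < (k:ℝ) := by exact_mod_cast Nat.lt_of_lt_of_le Nat.zero_lt_one hk
    have hb : (0:ℝ) ≤ ‖b‖ := norm_nonneg b
    have hz1 : (0:ℝ) < z - 1 := by linarith
    have step : ‖b‖ * (‖a‖ + ‖b‖) ^ (z - 2)
        ≤ 2 ^ (z - 2) * (‖b‖ ^ (z - 1) + ‖b‖ * ‖a‖ ^ (z - 2)) := by
      calc ‖b‖ * (‖a‖ + ‖b‖) ^ (z - 2)
          ≤ ‖b‖ * (2 ^ (z - 2) * (‖a‖ ^ (z - 2) + ‖b‖ ^ (z - 2))) :=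
            mul_le_mul_of_nonneg_left hM hb
        _ = 2 ^ (z - 2) * (‖b‖ * ‖a‖ ^ (z - 2) + ‖b‖ * ‖b‖ ^ (z - 2)) := by ring
        _ = 2 ^ (z - 2) * (‖b‖ ^ (z - 1) + ‖b‖ * ‖a‖ ^ (z - 2)) := by rw [hbb]; ring
    calc (k:ℝ) * ((z - 1) * ‖b‖ * (‖a‖ + ‖b‖) ^ (z - 2))
        = (k:ℝ) * (z - 1) * (‖b‖ * (‖a‖ + ‖b‖) ^ (z - 2)) := by ring
      _ ≤ (k:ℝ) * (z - 1) * (2 ^ (z - 2) * (‖b‖ ^ (z - 1) + ‖b‖ * ‖a‖ ^ (z - 2))) := by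
          have hpos : (0:ℝ) ≤ (k:ℝ) * (z - 1) := by positivity
          exact mul_le_mul_of_nonneg_left step hpos
      _ = (k:ℝ) * (z - 1) * 2 ^ (z - 2) * (‖b‖ ^ (z - 1) + ‖b‖ * ‖a‖ ^ (z - 2)) := by ring
end

section
/- Let k ≥ 1 be an integer and let z₊ ≥ 2 be a real number. For every ε > 0 there exists a constant C = C(ε, k, z₊) > 0 such that for every real exponent z with 2 ≤ z ≤ z₊ and all vectors a, b ∈ ℝ^k, one has | |a|^{z−2} a − |a−b|^{z−2}(a−b) | ≤ C |b|^{z−1} + ε |a|^{z−1}. -/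
/-!
Write `A = ‖a‖`, `B = ‖b‖`, `T = ‖a - b‖`, `p = z - 2 ∈ [0, z₊ - 2]`, and fix a small `δ ∈ (0, 1)`.
If `B ≤ δ A`, then `|T - A| ≤ δ A`, so `T^p` and `A^p` both lie between `(1 - δ)^{z₊-2} A^p` and
`(1 + δ)^{z₊-2} A^p`; splitting the difference as `(A^p - T^p) a + T^p b` bounds it by a multiple
of `A^{z-1}` which tends to `0` with `δ`, uniformly in `z`. If `B > δ A`, then `A` and `T` are at
most `(1 + δ⁻¹) B`, and the two terms are estimated separately.
-/

lemma rpow_mem_Icc_of_abs_sub_le {s t δ p P : ℝ} (hs : 0 ≤ s) (hδ₀ : 0 ≤ δ) (hδ₁ : δ < 1)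
    (hts : |t - s| ≤ δ * s) (hp : 0 ≤ p) (hpP : p ≤ P) :
    t ^ p ∈ Set.Icc ((1 - δ) ^ P * s ^ p) ((1 + δ) ^ P * s ^ p) := by
  obtain ⟨hlo, hhi⟩ := abs_sub_le_iff.1 hts
  have hlow : 0 ≤ (1 - δ) * s := mul_nonneg (by linarith) hs
  constructor
  · calc (1 - δ) ^ P * s ^ p ≤ (1 - δ) ^ p * s ^ p := by
          gcongr ?_ * _
          exact Real.rpow_le_rpow_of_exponent_ge (by linarith) (by linarith) hpP
      _ = ((1 - δ) * s) ^ p := (Real.mul_rpow (by linarith) hs).symm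
      _ ≤ t ^ p := Real.rpow_le_rpow hlow (by linarith) hp
  · calc t ^ p ≤ ((1 + δ) * s) ^ p := Real.rpow_le_rpow (by linarith) (by linarith) hp
      _ = (1 + δ) ^ p * s ^ p := Real.mul_rpow (by linarith) hs
      _ ≤ (1 + δ) ^ P * s ^ p := by
          gcongr ?_ * _
          exact Real.rpow_le_rpow_of_exponent_le (by linarith) hpP

lemma abs_rpow_sub_rpow_le_of_abs_sub_le {s t δ p P : ℝ} (hs : 0 ≤ s) (hδ₀ : 0 ≤ δ)
    (hδ₁ : δ < 1) (hts : |t - s| ≤ δ * s) (hp : 0 ≤ p) (hpP : p ≤ P) :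
    |t ^ p - s ^ p| ≤ ((1 + δ) ^ P - (1 - δ) ^ P) * s ^ p := by
  obtain ⟨htlo, hthi⟩ := rpow_mem_Icc_of_abs_sub_le hs hδ₀ hδ₁ hts hp hpP
  obtain ⟨hslo, hshi⟩ := rpow_mem_Icc_of_abs_sub_le (t := s) hs hδ₀ hδ₁
    (by rw [sub_self, abs_zero]; positivity) hp hpP
  rw [sub_mul]
  exact abs_sub_le_iff.2 ⟨by linarith, by linarith⟩

lemma rpow_le_rpow_mul_rpow_of_le_mul {x c B r Q : ℝ} (hx : 0 ≤ x) (hc : 1 ≤ c) (hB : 0 ≤ B)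
    (hxcB : x ≤ c * B) (hr : 0 ≤ r) (hrQ : r ≤ Q) : x ^ r ≤ c ^ Q * B ^ r :=
  calc x ^ r ≤ (c * B) ^ r := Real.rpow_le_rpow hx hxcB hr
    _ = c ^ r * B ^ r := Real.mul_rpow (by linarith) hB
    _ ≤ c ^ Q * B ^ r := by gcongr

lemma exists_rpow_one_add_sub_rpow_one_sub_lt {ε : ℝ} (hε : 0 < ε) (P : ℝ) :
    ∃ δ, 0 < δ ∧ δ < 1 ∧ (1 + δ) ^ P - (1 - δ) ^ P + δ * (1 + δ) ^ P < ε := by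
  have hcont : ContinuousAt (fun δ : ℝ => (1 + δ) ^ P - (1 - δ) ^ P + δ * (1 + δ) ^ P) 0 := by
    have hup : ContinuousAt (fun δ : ℝ => (1 + δ) ^ P) 0 :=
      (continuousAt_const.add continuousAt_id).rpow_const (.inl (by norm_num))
    have hdown : ContinuousAt (fun δ : ℝ => (1 - δ) ^ P) 0 :=
      (continuousAt_const.sub continuousAt_id).rpow_const (.inl (by norm_num))
    exact (hup.sub hdown).add (continuousAt_id.mul hup)
  have hlim := hcont.tendsto.mono_left (nhdsWithin_le_nhds (s := Set.Ioi 0))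
  simp only [add_zero, sub_zero, sub_self, zero_mul] at hlim
  have hsmall := hlim.eventually (gt_mem_nhds hε)
  obtain ⟨δ, hδε, hδ⟩ := (hsmall.and (Ioo_mem_nhdsGT one_pos)).exists
  exact ⟨δ, hδ.1, hδ.2, hδε⟩

section NormedSpace

variable {E : Type*} [NormedAddCommGroup E] [NormedSpace ℝ E]

lemma norm_rpow_smul_self {z : ℝ} (hz : z ≠ 1) (v : E) :
    ‖‖v‖ ^ (z - 2) • v‖ = ‖v‖ ^ (z - 1) := by
  rw [norm_smul, Real.norm_of_nonneg (by positivity), show z - 1 = z - 2 + 1 by ring,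
    Real.rpow_add_one' (norm_nonneg v) (by contrapose! hz; linarith)]

lemma norm_rpow_smul_sub_le_of_norm_le {z P δ : ℝ} (hz : 2 ≤ z) (hzP : z - 2 ≤ P)
    (hδ₀ : 0 ≤ δ) (hδ₁ : δ < 1) {a b : E} (hb : ‖b‖ ≤ δ * ‖a‖) :
    ‖‖a‖ ^ (z - 2) • a - ‖a - b‖ ^ (z - 2) • (a - b)‖ ≤
      ((1 + δ) ^ P - (1 - δ) ^ P + δ * (1 + δ) ^ P) * ‖a‖ ^ (z - 1) := by
  set A := ‖a‖
  set T := ‖a - b‖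
  have hTA : |T - A| ≤ δ * A := by
    rw [abs_sub_comm]
    exact (abs_norm_sub_norm_le a (a - b)).trans (by rwa [sub_sub_cancel])
  have hp : 0 ≤ z - 2 := by linarith
  have hA : A ^ (z - 1) = A ^ (z - 2) * A := by
    rw [show z - 1 = z - 2 + 1 by ring, Real.rpow_add_one' (norm_nonneg a) (by linarith)]
  have hsplit : A ^ (z - 2) • a - T ^ (z - 2) • (a - b) =
      (A ^ (z - 2) - T ^ (z - 2)) • a + T ^ (z - 2) • b := by
    rw [sub_smul, smul_sub]; abel
  have hdiff := abs_rpow_sub_rpow_le_of_abs_sub_le (norm_nonneg a) hδ₀ hδ₁ hTA hp hzP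
  have hT := (rpow_mem_Icc_of_abs_sub_le (norm_nonneg a) hδ₀ hδ₁ hTA hp hzP).2
  rw [hsplit, hA]
  calc ‖(A ^ (z - 2) - T ^ (z - 2)) • a + T ^ (z - 2) • b‖
      ≤ |T ^ (z - 2) - A ^ (z - 2)| * A + T ^ (z - 2) * ‖b‖ := by
        refine (norm_add_le _ _).trans_eq ?_
        rw [norm_smul, norm_smul, Real.norm_eq_abs, abs_sub_comm,
          Real.norm_of_nonneg (by positivity)]
    _ ≤ ((1 + δ) ^ P - (1 - δ) ^ P) * A ^ (z - 2) * A + (1 + δ) ^ P * A ^ (z - 2) * (δ * A) := by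
        gcongr
    _ = _ := by ring

lemma norm_rpow_smul_sub_le_of_le_norm {z Q δ : ℝ} (hz : 1 < z) (hzQ : z - 1 ≤ Q) (hδ : 0 < δ)
    {a b : E} (hb : δ * ‖a‖ ≤ ‖b‖) :
    ‖‖a‖ ^ (z - 2) • a - ‖a - b‖ ^ (z - 2) • (a - b)‖ ≤ 2 * (1 + δ⁻¹) ^ Q * ‖b‖ ^ (z - 1) := by
  have ha : ‖a‖ ≤ δ⁻¹ * ‖b‖ := by rwa [inv_mul_eq_div, le_div_iff₀' hδ]
  have hc : 1 ≤ 1 + δ⁻¹ := by linarith [inv_pos.2 hδ]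
  have hbound {x : ℝ} (hx : 0 ≤ x) (hxb : x ≤ (1 + δ⁻¹) * ‖b‖) :
      x ^ (z - 1) ≤ (1 + δ⁻¹) ^ Q * ‖b‖ ^ (z - 1) :=
    rpow_le_rpow_mul_rpow_of_le_mul hx hc (norm_nonneg b) hxb (by linarith) hzQ
  have hA := hbound (norm_nonneg a) (by nlinarith [norm_nonneg b])
  have hT := hbound (norm_nonneg (a - b)) (by linarith [norm_sub_le a b])
  calc _ ≤ ‖‖a‖ ^ (z - 2) • a‖ + ‖‖a - b‖ ^ (z - 2) • (a - b)‖ := norm_sub_le _ _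
    _ = ‖a‖ ^ (z - 1) + ‖a - b‖ ^ (z - 1) := by
        rw [norm_rpow_smul_self (by linarith), norm_rpow_smul_self (by linarith)]
    _ ≤ _ := by linarith

end NormedSpace

theorem young_type_estimate_large_exponent_general (k : ℕ) (zp : ℝ) :
    ∀ ε : ℝ, 0 < ε → ∃ C : ℝ, 0 < C ∧ ∀ z : ℝ, 2 ≤ z → z ≤ zp →
      ∀ a b : EuclideanSpace ℝ (Fin k),
        ‖(‖a‖ ^ (z - 2)) • a - (‖a - b‖ ^ (z - 2)) • (a - b)‖ ≤
          C * ‖b‖ ^ (z - 1) + ε * ‖a‖ ^ (z - 1) := by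
  intro ε hε
  obtain ⟨δ, hδ₀, hδ₁, hδε⟩ := exists_rpow_one_add_sub_rpow_one_sub_lt hε (zp - 2)
  refine ⟨2 * (1 + δ⁻¹) ^ (zp - 1), by positivity, fun z hz hzp a b => ?_⟩
  rcases le_total ‖b‖ (δ * ‖a‖) with hb | hb
  · calc _ ≤ ((1 + δ) ^ (zp - 2) - (1 - δ) ^ (zp - 2) + δ * (1 + δ) ^ (zp - 2)) * ‖a‖ ^ (z - 1) :=
          norm_rpow_smul_sub_le_of_norm_le hz (by linarith) hδ₀.le hδ₁ hb
      _ ≤ ε * ‖a‖ ^ (z - 1) := by gcongr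
      _ ≤ _ := le_add_of_nonneg_left (by positivity)
  · calc _ ≤ 2 * (1 + δ⁻¹) ^ (zp - 1) * ‖b‖ ^ (z - 1) :=
          norm_rpow_smul_sub_le_of_le_norm (by linarith) (by linarith) hδ₀ hb
      _ ≤ _ := le_add_of_nonneg_right (by positivity)

/-- For exponents `2 ≤ z ≤ z₊` and every `ε > 0` there is `C = C(ε,k,z₊) > 0` with
`| |a|^{z-2} a − |a−b|^{z-2}(a−b) | ≤ C |b|^{z−1} + ε |a|^{z−1}`. -/
theorem young_type_estimate_large_exponent (k : ℕ) (hk : 1 ≤ k) (zp : ℝ) (hzp : 2 ≤ zp) :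
    ∀ ε : ℝ, 0 < ε → ∃ C : ℝ, 0 < C ∧ ∀ z : ℝ, 2 ≤ z → z ≤ zp →
      ∀ a b : EuclideanSpace ℝ (Fin k),
        ‖(‖a‖ ^ (z - 2)) • a - (‖a - b‖ ^ (z - 2)) • (a - b)‖ ≤
          C * ‖b‖ ^ (z - 1) + ε * ‖a‖ ^ (z - 1) :=
  young_type_estimate_large_exponent_general k zp
end

section
/- Let k ≥ 1 be an integer and let p ≥ 2 be a real number. For all vectors a, b ∈ ℝ^k, one has ⟨ |a|^{p−2} a − |b|^{p−2} b , a − b ⟩ ≥ (2^{3−p}/p) |a − b|^{p}. -/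
/-! With `α = |a|^(p-2)`, `β = |b|^(p-2)` and `u = |a - b|²`, expanding the inner product gives
`2⟪α a - β b, a - b⟫ = (α + β) u + (α - β) (|a|² - |b|²)`, an affine function of `u`, whereas
`|a - b|^p = u^(p/2)` is convex in `u`.
Since `u` ranges over `[(|a| - |b|)², (|a| + |b|)²]`, it suffices to check the two endpoints, i.e.
collinear `a` and `b`. There the inequality reduces to `|x - y|^p ≤ (x - y)(x^(p-1) - y^(p-1))`, by
superadditivity of `s ↦ s^(p-1)`, and to `(x + y)^(p-1) ≤ 2^(p-2) (x^(p-1) + y^(p-1))`, the power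
mean inequality, which is where the constant `2^(3-p)/p` comes from. -/

open Real Set

namespace Real

lemma rpow_mul_self_of_add_one_eq {x y z : ℝ} (hx : 0 ≤ x) (hz : z ≠ 0) (h : y + 1 = z) :
    x ^ y * x = x ^ z := by
  rw [← h, rpow_add_one' hx (by rwa [h])]

lemma rpow_sub_le_rpow_sub_rpow {x y q : ℝ} (hy : 0 ≤ y) (hyx : y ≤ x) (hq : 1 ≤ q) :
    (x - y) ^ q ≤ x ^ q - y ^ q := by
  have := add_rpow_le_rpow_add (sub_nonneg.2 hyx) hy hq
  rw [sub_add_cancel] at this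
  linarith

lemma rpow_add_le_mul_rpow_add_rpow {x y q : ℝ} (hx : 0 ≤ x) (hy : 0 ≤ y) (hq : 1 ≤ q) :
    (x + y) ^ q ≤ 2 ^ (q - 1) * (x ^ q + y ^ q) := by
  lift x to NNReal using hx
  lift y to NNReal using hy
  exact_mod_cast NNReal.rpow_add_le_mul_rpow_add_rpow x y hq

lemma abs_sub_rpow_le_mul_rpow_sub_rpow {x y p : ℝ} (hx : 0 ≤ x) (hy : 0 ≤ y) (hp : 2 ≤ p) :
    |x - y| ^ p ≤ (x - y) * (x ^ (p - 1) - y ^ (p - 1)) := by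
  wlog hyx : y ≤ x generalizing x y
  · rw [abs_sub_comm, show (x - y) * (x ^ (p - 1) - y ^ (p - 1))
      = (y - x) * (y ^ (p - 1) - x ^ (p - 1)) by ring]
    exact this hy hx (le_of_not_ge hyx)
  rw [abs_of_nonneg (sub_nonneg.2 hyx), ← rpow_mul_self_of_add_one_eq (sub_nonneg.2 hyx)
    (by positivity) (sub_add_cancel p 1), mul_comm (x - y) (x ^ (p - 1) - _)]
  exact mul_le_mul_of_nonneg_right (rpow_sub_le_rpow_sub_rpow hy hyx (by linarith))
    (sub_nonneg.2 hyx)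

end Real

lemma ConvexOn.le_affine_of_mem_Icc {s : Set ℝ} {f : ℝ → ℝ} (hf : ConvexOn ℝ s f)
    {x y z m c : ℝ} (hx : x ∈ s) (hy : y ∈ s) (hfx : f x ≤ m * x + c) (hfy : f y ≤ m * y + c)
    (hz : z ∈ Icc x y) : f z ≤ m * z + c := by
  rw [← segment_eq_Icc (hz.1.trans hz.2)] at hz
  obtain ⟨θ, η, hθ, hη, hθη, rfl⟩ := hz
  calc f (θ • x + η • y) ≤ θ • f x + η • f y := hf.2 hx hy hθ hη hθη
    _ ≤ θ * (m * x + c) + η * (m * y + c) := by simp only [smul_eq_mul]; gcongr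
    _ = m * (θ • x + η • y) + c := by simp only [smul_eq_mul]; linear_combination c * hθη

lemma two_mul_inner_smul_sub_smul {E : Type*} [NormedAddCommGroup E] [InnerProductSpace ℝ E]
    (α β : ℝ) (a b : E) :
    2 * inner ℝ (α • a - β • b) (a - b) =
      (α + β) * ‖a - b‖ ^ 2 + (α - β) * (‖a‖ ^ 2 - ‖b‖ ^ 2) := by
  rw [norm_sub_sq_real]
  simp only [inner_sub_left, inner_sub_right, real_inner_smul_left,
    real_inner_self_eq_norm_sq, real_inner_comm b a]
  ring

lemma two_rpow_three_sub_div_le_one {p : ℝ} (hp : 2 ≤ p) : 2 ^ (3 - p) / p ≤ (1 : ℝ) := by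
  have : (2 : ℝ) ^ (3 - p) ≤ 2 ^ (1 : ℝ) := rpow_le_rpow_of_exponent_le (by norm_num) (by linarith)
  rw [rpow_one] at this
  rw [div_le_one (by linarith)]
  linarith

lemma two_rpow_three_sub_div_mul_add_rpow_le {x y p : ℝ} (hx : 0 ≤ x) (hy : 0 ≤ y) (hp : 2 ≤ p) :
    2 ^ (3 - p) / p * (x + y) ^ p ≤ (x + y) * (x ^ (p - 1) + y ^ (p - 1)) := by
  have hxy : 0 ≤ x + y := by positivity
  have hmean := rpow_add_le_mul_rpow_add_rpow hx hy (by linarith : 1 ≤ p - 1)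
  have hconst : (2 : ℝ) ^ (3 - p) * 2 ^ (p - 1 - 1) = 2 := by
    rw [← rpow_add two_pos, show 3 - p + (p - 1 - 1) = 1 by ring, rpow_one]
  calc 2 ^ (3 - p) / p * (x + y) ^ p
      = 2 ^ (3 - p) / p * ((x + y) ^ (p - 1) * (x + y)) := by
        rw [rpow_mul_self_of_add_one_eq hxy (by linarith) (sub_add_cancel p 1)]
    _ ≤ 2 ^ (3 - p) / p * (2 ^ (p - 1 - 1) * (x ^ (p - 1) + y ^ (p - 1)) * (x + y)) := by
        gcongr
    _ = 2 / p * ((x + y) * (x ^ (p - 1) + y ^ (p - 1))) := by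
        linear_combination (x + y) * (x ^ (p - 1) + y ^ (p - 1)) / p * hconst
    _ ≤ (x + y) * (x ^ (p - 1) + y ^ (p - 1)) := by
        refine mul_le_of_le_one_left (by positivity) ?_
        rw [div_le_one (by linarith)]
        exact hp

lemma two_mul_two_rpow_three_sub_div_mul_rpow_le {A B t p : ℝ} (hp : 2 ≤ p) (hA : 0 ≤ A)
    (hB : 0 ≤ B) (ht : |A - B| ≤ t) (ht' : t ≤ A + B) :
    2 * (2 ^ (3 - p) / p * t ^ p) ≤
      (A ^ (p - 2) + B ^ (p - 2)) * t ^ 2 + (A ^ (p - 2) - B ^ (p - 2)) * (A ^ 2 - B ^ 2) := by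
  set c : ℝ := 2 ^ (3 - p) / p
  have hc : c ≤ 1 := two_rpow_three_sub_div_le_one hp
  have hsq_rpow : ∀ s : ℝ, 0 ≤ s → (s ^ 2) ^ (p / 2) = s ^ p := fun s hs => by
    rw [← rpow_natCast_mul hs, Nat.cast_ofNat, mul_div_cancel₀ p two_ne_zero]
  have hA' : A ^ (p - 2) * A = A ^ (p - 1) :=
    rpow_mul_self_of_add_one_eq hA (by linarith) (by ring)
  have hB' : B ^ (p - 2) * B = B ^ (p - 1) :=
    rpow_mul_self_of_add_one_eq hB (by linarith) (by ring)
  have hconv : ConvexOn ℝ (Ici 0) fun u : ℝ => 2 * c * u ^ (p / 2) :=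
    (convexOn_rpow (by linarith)).smul (by positivity)
  have hlow : 2 * c * (|A - B| ^ 2) ^ (p / 2) ≤
      (A ^ (p - 2) + B ^ (p - 2)) * |A - B| ^ 2 +
        (A ^ (p - 2) - B ^ (p - 2)) * (A ^ 2 - B ^ 2) := by
    rw [hsq_rpow _ (abs_nonneg _), sq_abs]
    calc 2 * c * |A - B| ^ p ≤ 2 * |A - B| ^ p := by gcongr; linarith
      _ ≤ 2 * ((A - B) * (A ^ (p - 1) - B ^ (p - 1))) := by
        gcongr; exact abs_sub_rpow_le_mul_rpow_sub_rpow hA hB hp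
      _ = _ := by rw [← hA', ← hB']; ring
  have hhigh : 2 * c * ((A + B) ^ 2) ^ (p / 2) ≤
      (A ^ (p - 2) + B ^ (p - 2)) * (A + B) ^ 2 +
        (A ^ (p - 2) - B ^ (p - 2)) * (A ^ 2 - B ^ 2) := by
    rw [hsq_rpow _ (by positivity)]
    calc 2 * c * (A + B) ^ p ≤ 2 * ((A + B) * (A ^ (p - 1) + B ^ (p - 1))) := by
          rw [mul_assoc]
          exact mul_le_mul_of_nonneg_left (two_rpow_three_sub_div_mul_add_rpow_le hA hB hp)
            zero_le_two
      _ = _ := by rw [← hA', ← hB']; ring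
  have key := hconv.le_affine_of_mem_Icc (mem_Ici.2 (sq_nonneg _)) (mem_Ici.2 (sq_nonneg _))
    hlow hhigh
    ⟨pow_le_pow_left₀ (abs_nonneg _) ht 2, pow_le_pow_left₀ ((abs_nonneg _).trans ht) ht' 2⟩
  rw [hsq_rpow t ((abs_nonneg _).trans ht)] at key
  linarith

theorem two_rpow_three_sub_div_mul_norm_sub_rpow_le_inner {E : Type*} [NormedAddCommGroup E]
    [InnerProductSpace ℝ E] {p : ℝ} (hp : 2 ≤ p) (a b : E) :
    2 ^ (3 - p) / p * ‖a - b‖ ^ p ≤ inner ℝ (‖a‖ ^ (p - 2) • a - ‖b‖ ^ (p - 2) • b) (a - b) := by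
  have := two_mul_two_rpow_three_sub_div_mul_rpow_le hp (norm_nonneg a) (norm_nonneg b)
    (abs_norm_sub_norm_le a b) (norm_sub_le a b)
  rw [← two_mul_inner_smul_sub_smul] at this
  linarith

theorem p_laplacian_monotonicity_large_p_general (k : ℕ) (p : ℝ) (hp : 2 ≤ p)
    (a b : EuclideanSpace ℝ (Fin k)) :
    (inner ℝ ((‖a‖ ^ (p - 2)) • a - (‖b‖ ^ (p - 2)) • b) (a - b) : ℝ) ≥
      (2 ^ (3 - p) / p) * ‖a - b‖ ^ p :=
  two_rpow_three_sub_div_mul_norm_sub_rpow_le_inner hp a b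

/-- Monotonicity inequality for the `p`-Laplacian vector field, case `p ≥ 2`. -/
theorem p_laplacian_monotonicity_large_p (k : ℕ) (hk : 1 ≤ k) (p : ℝ) (hp : 2 ≤ p)
    (a b : EuclideanSpace ℝ (Fin k)) :
    (inner ℝ ((‖a‖ ^ (p - 2)) • a - (‖b‖ ^ (p - 2)) • b) (a - b) : ℝ) ≥
      (2 ^ (3 - p) / p) * ‖a - b‖ ^ p :=
  p_laplacian_monotonicity_large_p_general k p hp a b
end

section
/- Let k ≥ 1 be an integer and let p be a real number with 1 < p < 2. For all vectors a, b ∈ ℝ^k with (a, b) ≠ (0, 0), one has ⟨ |a|^{p−2} a − |b|^{p−2} b , a − b ⟩ ≥ (p−1) |a − b|² / ( |a| + |b| )^{2−p}. -/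
/-!
Write `A = ‖a‖`, `B = ‖b‖`. Expanding the inner product splits the left-hand side into a radial
part `(A^(p-1) - B^(p-1)) (A - B)` and an angular part `(A^(p-2) + B^(p-2)) (A B - ⟪a, b⟫)`, and
`‖a - b‖²` splits the same way into `(A - B)² + 2 (A B - ⟪a, b⟫)`. The angular parts compare because
`(A + B)^(p-2)` is at most both `A^(p-2)` and `B^(p-2)`; the radial parts compare by concavity of
`x ↦ x^(p-1)`, whose tangent at the larger of `A, B` has slope `(p-1) max(A, B)^(p-2) ≥ (p-1) (A+B)^(p-2)`.
-/

open Real RealInnerProductSpace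

namespace Real

lemma rpow_le_rpow_add_mul_sub {q A B : ℝ} (hq0 : 0 ≤ q) (hq1 : q ≤ 1) (hA : 0 < A)
    (hB : 0 ≤ B) : B ^ q ≤ A ^ q + q * A ^ (q - 1) * (B - A) := by
  have hbern := rpow_one_add_le_one_add_mul_self (s := B / A - 1)
    (by linarith [div_nonneg hB hA.le]) hq0 hq1
  rw [add_sub_cancel, div_rpow hB hA.le] at hbern
  have hAq : 0 < A ^ q := rpow_pos_of_pos hA q
  calc B ^ q = A ^ q * (B ^ q / A ^ q) := by field_simp
    _ ≤ A ^ q * (1 + q * (B / A - 1)) := mul_le_mul_of_nonneg_left hbern hAq.le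
    _ = A ^ q + q * A ^ (q - 1) * (B - A) := by
      rw [rpow_sub_one hA.ne']; field_simp

lemma le_rpow_sub_rpow_mul_sub {q A B : ℝ} (hq0 : 0 ≤ q) (hq1 : q ≤ 1) (hA : 0 ≤ A)
    (hB : 0 ≤ B) : q * (A + B) ^ (q - 1) * (A - B) ^ 2 ≤ (A ^ q - B ^ q) * (A - B) := by
  wlog hBA : B ≤ A generalizing A B
  · have := this hB hA (le_of_not_ge hBA)
    rw [add_comm] at this
    linarith
  rcases hA.eq_or_lt with rfl | hA
  · obtain rfl : B = 0 := le_antisymm hBA hB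
    simp
  have hslope : (A + B) ^ (q - 1) ≤ A ^ (q - 1) :=
    rpow_le_rpow_of_nonpos hA (le_add_of_nonneg_right hB) (by linarith)
  have htangent := rpow_le_rpow_add_mul_sub hq0 hq1 hA hB
  have hAB : 0 ≤ A - B := sub_nonneg.2 hBA
  calc q * (A + B) ^ (q - 1) * (A - B) ^ 2 ≤ q * A ^ (q - 1) * (A - B) * (A - B) := by
        rw [sq, ← mul_assoc]
        gcongr
    _ ≤ (A ^ q - B ^ q) * (A - B) := by gcongr; linarith

end Real

section InnerProductSpace

variable {F : Type*} [NormedAddCommGroup F] [InnerProductSpace ℝ F]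

lemma inner_smul_sub_smul_sub (a b : F) (c d : ℝ) :
    ⟪c • a - d • b, a - b⟫ =
      (c * ‖a‖ - d * ‖b‖) * (‖a‖ - ‖b‖) + (c + d) * (‖a‖ * ‖b‖ - ⟪a, b⟫) := by
  rw [inner_sub_left, inner_sub_right, inner_sub_right, real_inner_smul_left,
    real_inner_smul_left, real_inner_smul_left, real_inner_smul_left,
    real_inner_self_eq_norm_sq, real_inner_self_eq_norm_sq, real_inner_comm b a]
  ring

lemma norm_sub_sq_eq_sq_sub_add (a b : F) :
    ‖a - b‖ ^ 2 = (‖a‖ - ‖b‖) ^ 2 + 2 * (‖a‖ * ‖b‖ - ⟪a, b⟫) := by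
  rw [norm_sub_sq_real]; ring

lemma two_mul_add_rpow_mul_le_of_nonpos (a b : F) {r : ℝ} (hr : r ≤ 0) :
    2 * (‖a‖ + ‖b‖) ^ r * (‖a‖ * ‖b‖ - ⟪a, b⟫) ≤
      (‖a‖ ^ r + ‖b‖ ^ r) * (‖a‖ * ‖b‖ - ⟪a, b⟫) := by
  rcases eq_or_ne a 0 with rfl | ha
  · simp
  rcases eq_or_ne b 0 with rfl | hb
  · simp
  have hA := norm_pos_iff.2 ha
  have hB := norm_pos_iff.2 hb
  rw [two_mul]
  exact mul_le_mul_of_nonneg_right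
    (add_le_add (rpow_le_rpow_of_nonpos hA (le_add_of_nonneg_right hB.le) hr)
      (rpow_le_rpow_of_nonpos hB (le_add_of_nonneg_left hA.le) hr))
    (sub_nonneg.2 (real_inner_le_norm a b))

end InnerProductSpace

theorem p_laplacian_monotonicity_small_p_general (k : ℕ) (p : ℝ)
    (hp1 : 1 < p) (hp2 : p < 2)
    (a b : EuclideanSpace ℝ (Fin k)) :
    (inner ℝ ((‖a‖ ^ (p - 2)) • a - (‖b‖ ^ (p - 2)) • b) (a - b) : ℝ) ≥
      (p - 1) * ‖a - b‖ ^ 2 / (‖a‖ + ‖b‖) ^ (2 - p) := by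
  have hpow (x : ℝ) (hx : 0 ≤ x) : x ^ (p - 2) * x = x ^ (p - 1) := by
    rw [← rpow_add_one' hx (by linarith)]; ring_nf
  have hradial := le_rpow_sub_rpow_mul_sub (q := p - 1) (by linarith) (by linarith)
    (norm_nonneg a) (norm_nonneg b)
  rw [sub_sub, one_add_one_eq_two] at hradial
  have hangular := two_mul_add_rpow_mul_le_of_nonpos a b (r := p - 2) (by linarith)
  have hweight : 0 ≤ (‖a‖ + ‖b‖) ^ (p - 2) * (‖a‖ * ‖b‖ - ⟪a, b⟫) :=
    mul_nonneg (by positivity) (sub_nonneg.2 (real_inner_le_norm a b))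
  rw [ge_iff_le, div_eq_mul_inv, ← rpow_neg (by positivity), neg_sub,
    norm_sub_sq_eq_sq_sub_add, inner_smul_sub_smul_sub, hpow _ (norm_nonneg a),
    hpow _ (norm_nonneg b)]
  linarith [mul_le_mul_of_nonneg_right hp2.le hweight]

/-- Monotonicity inequality for the `p`-Laplacian vector field, case `1 < p < 2`. -/
theorem p_laplacian_monotonicity_small_p (k : ℕ) (hk : 1 ≤ k) (p : ℝ)
    (hp1 : 1 < p) (hp2 : p < 2)
    (a b : EuclideanSpace ℝ (Fin k)) (hab : (a, b) ≠ (0, 0)) :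
    (inner ℝ ((‖a‖ ^ (p - 2)) • a - (‖b‖ ^ (p - 2)) • b) (a - b) : ℝ) ≥
      (p - 1) * ‖a - b‖ ^ 2 / (‖a‖ + ‖b‖) ^ (2 - p) :=
  p_laplacian_monotonicity_small_p_general k p hp1 hp2 a b
end
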